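/- arXiv:2003.02187 — 7 statements merged into one kernel-verified Lean document; each statement's English description precedes it below -/
import Mathlib

section
/- Let τ ≥ 2 and a₁,…,a_τ be positive integers each at most τ. Let F be the τ × 2τ integer matrix (G | −I) where G is lower-triangular with G_{k,ℓ} = a_ℓ for ℓ ≤ k and 0 otherwise, and I is the τ × τ identity. Then every element (g,h) of the Graver basis of F satisfies ‖(g,h)‖_∞ ≤ C·τ⁴ for some absolute constant C (e.g. C = 3 suffices). -/
/-- `g` is conformal to `h`: same orthant and componentwise smaller. -/
def ConformalTo {n : Type*} (g h : n → ℤ) : Prop :=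
  ∀ i, 0 ≤ g i * h i ∧ |g i| ≤ |h i|

/-- `g` is an element of the Graver basis of `A`: a ⊑-minimal nonzero integer
kernel element. -/
def InGraver {m n : Type*} [Fintype m] [Fintype n] (A : Matrix m n ℤ) (g : n → ℤ) : Prop :=
  g ≠ 0 ∧ A.mulVec g = 0 ∧
    ∀ g' : n → ℤ, g' ≠ 0 → A.mulVec g' = 0 → ConformalTo g' g → g' = g

/-!
Write a kernel element of `F` as `(x, z)`, so that `z k = ∑_{ℓ ≤ k} a ℓ x ℓ` is a prefix sum.
Suppose `z k > τ⁴` for a Graver element. Let `p ≤ k` be the last index before `k` where the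
prefix sums (starting with the empty sum `0`) are below `τ²`, and `q > k` the first one after `k` (if there is one). A rise of more
than `τ⁴ - τ²` in at most `τ` steps of size `a i x i ≤ τ x i` forces some `c ∈ [p, k]` with
`x c ≥ τ`; likewise the fall to `q` forces `f ∈ (k, q)` with `x f ≤ -τ`. Then
`x' = a f e_c - a c e_f` (or `e_c` if there is no `q`) is conformal to `x`, and its prefix sums,
`a c a f ≤ τ²` on `(c, f]` and `0` elsewhere, are conformal to those of `x`. So `(x', z')` is a
nonzero kernel element strictly below `(x, z)`, a contradiction. Applying this to `-(x, z)` gives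
`|z k| ≤ τ⁴`, and then `|x k| ≤ |a k x k| = |z k - z (k - 1)| ≤ 2 τ⁴`.
-/

open Finset

lemma conformalTo_of_forall_mem_uIcc {ι : Type*} {g h : ι → ℤ}
    (hgh : ∀ i, g i ∈ Set.uIcc 0 (h i)) : ConformalTo g h := by
  intro i
  rcases Set.mem_uIcc.1 (hgh i) with ⟨h0, hle⟩ | ⟨hle, h0⟩
  · exact ⟨mul_nonneg h0 (h0.trans hle), abs_le_abs_of_nonneg h0 hle⟩
  · exact ⟨mul_nonneg_of_nonpos_of_nonpos h0 (hle.trans h0), abs_le_abs_of_nonpos h0 hle⟩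

lemma ConformalTo.neg {ι : Type*} {g h : ι → ℤ} (hgh : ConformalTo g h) :
    ConformalTo (-g) (-h) :=
  fun i => by simpa only [Pi.neg_apply, neg_mul_neg, abs_neg] using hgh i

lemma exists_last_lt {S : ℕ → ℤ} {T : ℤ} {m : ℕ} (h0 : S 0 < T) (hm : T ≤ S m) :
    ∃ p < m, S p < T ∧ ∀ n, p < n → n ≤ m → T ≤ S n := by
  classical
  have hp : S (Nat.findGreatest (S · < T) m) < T :=
    Nat.findGreatest_spec (P := (S · < T)) (Nat.zero_le m) h0
  refine ⟨_, (Nat.findGreatest_le m).lt_of_ne fun hpm => ?_, hp,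
    fun n hpn hnm => not_lt.1 (Nat.findGreatest_is_greatest hpn hnm)⟩
  rw [hpm] at hp
  exact hp.not_ge hm

lemma exists_first_lt {S : ℕ → ℤ} {T : ℤ} {m N : ℕ} (hm : T ≤ S m)
    (h : ∃ j, m ≤ j ∧ j ≤ N ∧ S j < T) :
    ∃ q, m < q ∧ q ≤ N ∧ S q < T ∧ ∀ n, m ≤ n → n < q → T ≤ S n := by
  classical
  obtain ⟨hmq, hqN, hq⟩ := Nat.find_spec h
  refine ⟨Nat.find h, hmq.lt_of_ne fun hmq => ?_, hqN, hq, fun n hmn hnq => not_lt.1 fun hn => ?_⟩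
  · rw [← hmq] at hq
    exact hq.not_ge hm
  · exact (Nat.find_min' h ⟨hmn, by omega, hn⟩).not_gt hnq

/-- Sums over `i < n`: row `k` of `F` involves `prefixSum b y (k + 1)`. -/
def prefixSum (b y : ℕ → ℤ) (n : ℕ) : ℤ := ∑ i ∈ range n, b i * y i

section PrefixSum

variable (b : ℕ → ℤ)

@[simp] lemma prefixSum_zero (y : ℕ → ℤ) : prefixSum b y 0 = 0 := sum_range_zero _

lemma prefixSum_succ (y : ℕ → ℤ) (n : ℕ) :
    prefixSum b y (n + 1) = prefixSum b y n + b n * y n :=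
  sum_range_succ _ _

lemma prefixSum_neg (y : ℕ → ℤ) : prefixSum b (-y) = -prefixSum b y := by
  ext n; simp [prefixSum]

lemma prefixSum_sub (y y' : ℕ → ℤ) :
    prefixSum b (y - y') = prefixSum b y - prefixSum b y' := by
  ext n; simp [prefixSum, mul_sub]

lemma prefixSum_single (c : ℕ) (u : ℤ) (n : ℕ) :
    prefixSum b (Pi.single c u) n = if c < n then b c * u else 0 := by
  simp [prefixSum, Pi.single_apply]

lemma prefixSum_eq_of_le {y : ℕ → ℤ} {N n : ℕ} (hy : ∀ i, N ≤ i → y i = 0) (hn : N ≤ n) :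
    prefixSum b y n = prefixSum b y N := by
  refine (sum_subset (range_subset_range.2 hn) fun i _ hi => ?_).symm
  rw [hy i (by simpa using hi), mul_zero]

lemma exists_lt_mul_of_mul_lt_prefixSum_sub {y : ℕ → ℤ} {p m : ℕ} {B : ℤ} (hpm : p ≤ m)
    (h : (m - p : ℕ) * B < prefixSum b y m - prefixSum b y p) :
    ∃ i, p ≤ i ∧ i < m ∧ B < b i * y i := by
  rw [prefixSum, prefixSum, ← sum_Ico_eq_sub _ hpm] at h
  obtain ⟨i, hi, hB⟩ := exists_lt_of_sum_lt (s := Ico p m) (f := fun _ => B) (by simpa using h)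
  exact ⟨i, (mem_Ico.1 hi).1, (mem_Ico.1 hi).2, hB⟩

lemma exists_le_of_mul_lt_prefixSum_sub {y : ℕ → ℤ} {p m L : ℕ} {β Y : ℤ} (hpm : p ≤ m)
    (hlen : m ≤ p + L) (hb : ∀ i, p ≤ i → i < m → 0 ≤ b i ∧ b i ≤ β)
    (hβY : 0 ≤ β * (Y - 1)) (h : L * (β * (Y - 1)) < prefixSum b y m - prefixSum b y p) :
    ∃ i, p ≤ i ∧ i < m ∧ Y ≤ y i := by
  have hlen' : ((m - p : ℕ) : ℤ) ≤ L := Nat.cast_le.2 (by omega)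
  obtain ⟨i, hpi, him, hi⟩ := exists_lt_mul_of_mul_lt_prefixSum_sub b hpm
    ((mul_le_mul_of_nonneg_right hlen' hβY).trans_lt h)
  refine ⟨i, hpi, him, not_lt.1 fun hy => ?_⟩
  obtain ⟨hb0, hbβ⟩ := hb i hpi him
  rcases le_total 0 (y i) with hy0 | hy0
  · nlinarith
  · nlinarith

lemma conformalTo_prefixSum_single {y : ℕ → ℤ} {c : ℕ} (hb : 0 ≤ b c) (hy : 1 ≤ y c)
    (hP : ∀ n, c < n → b c ≤ prefixSum b y n) :
    ConformalTo (Pi.single c 1) y ∧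
      ConformalTo (prefixSum b (Pi.single c 1)) (prefixSum b y) := by
  constructor <;> refine conformalTo_of_forall_mem_uIcc fun n => ?_
  · rcases eq_or_ne n c with rfl | hn
    · simpa using Set.mem_uIcc_of_le zero_le_one hy
    · simp [hn]
  · rw [prefixSum_single, mul_one]
    split_ifs with hn
    · exact Set.mem_uIcc_of_le hb (hP n hn)
    · exact Set.left_mem_uIcc

lemma conformalTo_prefixSum_single_sub_single {y : ℕ → ℤ} {c f : ℕ} (hcf : c < f)
    (hbc : 0 ≤ b c) (hbf : 0 ≤ b f) (hyc : b f ≤ y c) (hyf : y f ≤ -b c)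
    (hP : ∀ n, c < n → n ≤ f → b c * b f ≤ prefixSum b y n) :
    ConformalTo (Pi.single c (b f) - Pi.single f (b c)) y ∧
      ConformalTo (prefixSum b (Pi.single c (b f) - Pi.single f (b c))) (prefixSum b y) := by
  constructor <;> refine conformalTo_of_forall_mem_uIcc fun n => ?_
  · rcases eq_or_ne n c with rfl | hnc
    · simpa [hcf.ne] using Set.mem_uIcc_of_le hbf hyc
    rcases eq_or_ne n f with rfl | hnf
    · simpa [hcf.ne'] using Set.mem_uIcc_of_ge hyf (neg_nonpos.2 hbc)
    · simp [hnc, hnf]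
  · rw [prefixSum_sub, Pi.sub_apply, prefixSum_single, prefixSum_single, mul_comm (b f)]
    by_cases hcn : c < n
    · by_cases hfn : f < n
      · simp [hcn, hfn]
      · simpa [hcn, hfn] using Set.mem_uIcc_of_le (mul_nonneg hbc hbf) (hP n hcn (by omega))
    · simp [hcn, show ¬f < n by omega]

lemma exists_ascent_with_large_coord {τ m : ℕ} {y : ℕ → ℤ}
    (hb : ∀ i < τ, 0 ≤ b i ∧ b i ≤ τ) (hτ : (1 : ℤ) ≤ τ) (hm : m ≤ τ)
    (hbig : (τ : ℤ) ^ 4 < prefixSum b y m) :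
    ∃ p c, p ≤ c ∧ c < m ∧ (τ : ℤ) ≤ y c ∧
      ∀ n, p < n → n ≤ m → (τ : ℤ) ^ 2 ≤ prefixSum b y n := by
  have hτ24 : (τ : ℤ) ^ 2 ≤ τ ^ 4 := pow_le_pow_right₀ hτ (by norm_num)
  have hτ34 : (τ : ℤ) ^ 3 ≤ τ ^ 4 := pow_le_pow_right₀ hτ (by norm_num)
  obtain ⟨p, hpm, hp, hpP⟩ := exists_last_lt (S := prefixSum b y) (T := τ ^ 2)
    (by simp only [prefixSum_zero]; positivity) (by linarith)
  obtain ⟨c, hpc, hcm, hc⟩ : ∃ c, p ≤ c ∧ c < m ∧ (τ : ℤ) ≤ y c :=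
    exists_le_of_mul_lt_prefixSum_sub b hpm.le (L := τ) (by omega)
      (fun i _ hi => hb i (by omega)) (by nlinarith) (by nlinarith)
  exact ⟨p, c, hpc, hcm, hc, hpP⟩

lemma exists_descent_with_large_coord {τ m : ℕ} {y : ℕ → ℤ}
    (hb : ∀ i < τ, 0 ≤ b i ∧ b i ≤ τ) (hτ : (1 : ℤ) ≤ τ)
    (hbig : (τ : ℤ) ^ 4 < prefixSum b y m)
    (hdesc : ∃ j, m ≤ j ∧ j ≤ τ ∧ prefixSum b y j < τ ^ 2) :
    ∃ f q, m ≤ f ∧ f < q ∧ q ≤ τ ∧ y f ≤ -τ ∧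
      ∀ n, m ≤ n → n < q → (τ : ℤ) ^ 2 ≤ prefixSum b y n := by
  have hτ24 : (τ : ℤ) ^ 2 ≤ τ ^ 4 := pow_le_pow_right₀ hτ (by norm_num)
  have hτ34 : (τ : ℤ) ^ 3 ≤ τ ^ 4 := pow_le_pow_right₀ hτ (by norm_num)
  obtain ⟨q, hmq, hqτ, hq, hqP⟩ := exists_first_lt (by linarith) hdesc
  obtain ⟨f, hmf, hfq, hf⟩ : ∃ f, m ≤ f ∧ f < q ∧ (τ : ℤ) ≤ (-y) f :=
    exists_le_of_mul_lt_prefixSum_sub b hmq.le (L := τ) (by omega)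
      (fun i _ hi => hb i (by omega)) (by nlinarith)
      (by rw [prefixSum_neg, Pi.neg_apply, Pi.neg_apply]; nlinarith)
  exact ⟨f, q, hmf, hfq, hqτ, by rw [Pi.neg_apply] at hf; linarith, hqP⟩

theorem exists_conformalTo_prefixSum_lt {τ m : ℕ} {y : ℕ → ℤ}
    (hb : ∀ i < τ, 1 ≤ b i ∧ b i ≤ τ) (hy : ∀ i, τ ≤ i → y i = 0) (hm : m ≤ τ)
    (hbig : (τ : ℤ) ^ 4 < prefixSum b y m) :
    ∃ y', ConformalTo y' y ∧ ConformalTo (prefixSum b y') (prefixSum b y) ∧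
      0 < prefixSum b y' m ∧ prefixSum b y' m < prefixSum b y m := by
  set P := prefixSum b y
  have hτ : (1 : ℤ) ≤ τ := by
    rcases Nat.eq_zero_or_pos τ with rfl | hτ
    · obtain rfl : m = 0 := by omega
      simp [P] at hbig
    · exact_mod_cast hτ
  have hτ24 : (τ : ℤ) ^ 2 ≤ τ ^ 4 := pow_le_pow_right₀ hτ (by norm_num)
  have hb₀ : ∀ i < τ, 0 ≤ b i ∧ b i ≤ τ := fun i hi => ⟨by linarith [hb i hi], (hb i hi).2⟩
  obtain ⟨p, c, hpc, hcm, hc, hpP⟩ := exists_ascent_with_large_coord b hb₀ hτ hm hbig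
  obtain ⟨hbc, hbcτ⟩ := hb c (by omega)
  by_cases hdesc : ∃ j, m ≤ j ∧ j ≤ τ ∧ P j < τ ^ 2
  · obtain ⟨f, q, hmf, hfq, hqτ, hf, hqP⟩ := exists_descent_with_large_coord b hb₀ hτ hbig
      hdesc
    obtain ⟨hbf, hbfτ⟩ := hb f (by omega)
    have hPcf : ∀ n, c < n → n ≤ f → b c * b f ≤ P n := fun n hcn hnf => by
      rcases le_or_gt n m with hnm | hmn
      · nlinarith [hpP n (by omega) hnm]
      · nlinarith [hqP n hmn.le (by omega)]
    obtain ⟨hy', hP'⟩ := conformalTo_prefixSum_single_sub_single b (hcm.trans_le hmf)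
      (by linarith) (by linarith) (by linarith) (by linarith) hPcf
    refine ⟨_, hy', hP', ?_⟩
    rw [prefixSum_sub, Pi.sub_apply, prefixSum_single, prefixSum_single, if_pos hcm,
      if_neg (by omega), sub_zero]
    constructor <;> nlinarith
  · push Not at hdesc
    have hP : ∀ n, p < n → (τ : ℤ) ^ 2 ≤ P n := fun n hpn => by
      rcases le_or_gt n m with hnm | hmn
      · exact hpP n hpn hnm
      rcases le_or_gt n τ with hnτ | hτn
      · exact hdesc n hmn.le hnτ
      · rw [show P n = P τ from prefixSum_eq_of_le b hy hτn.le]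
        exact hdesc τ hm le_rfl
    obtain ⟨hy', hP'⟩ := conformalTo_prefixSum_single b (y := y) (by linarith) (by linarith)
      fun n hcn => by nlinarith [hP n (by omega)]
    refine ⟨_, hy', hP', ?_⟩
    rw [prefixSum_single, if_pos hcm]
    constructor <;> nlinarith

lemma abs_le_two_mul_of_abs_prefixSum_le {y : ℕ → ℤ} {i : ℕ} {B : ℤ} (hb : 1 ≤ b i)
    (h₀ : |prefixSum b y i| ≤ B) (h₁ : |prefixSum b y (i + 1)| ≤ B) : |y i| ≤ 2 * B :=
  calc |y i| ≤ |b i| * |y i| := le_mul_of_one_le_left (abs_nonneg _) (hb.trans (le_abs_self _))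
    _ = |prefixSum b y (i + 1) - prefixSum b y i| := by rw [prefixSum_succ, ← abs_mul]; ring_nf
    _ ≤ |prefixSum b y (i + 1)| + |prefixSum b y i| := abs_sub _ _
    _ ≤ 2 * B := by linarith

end PrefixSum

lemma InGraver.neg {m n : Type*} [Fintype m] [Fintype n] {A : Matrix m n ℤ} {g : n → ℤ}
    (hg : InGraver A g) : InGraver A (-g) := by
  obtain ⟨h0, hker, hmin⟩ := hg
  refine ⟨neg_ne_zero.2 h0, by rw [Matrix.mulVec_neg, hker, neg_zero],
    fun g' hg'0 hg'k hg'c => ?_⟩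
  have := hmin (-g') (neg_ne_zero.2 hg'0) (by rw [Matrix.mulVec_neg, hg'k, neg_zero])
    (by simpa using hg'c.neg)
  rw [← this, neg_neg]

section LowerTriangular

variable {τ : ℕ} {a : Fin τ → ℤ} {F : Matrix (Fin τ) (Fin τ ⊕ Fin τ) ℤ}

lemma sum_ite_le_mul_eq_prefixSum (a x : Fin τ → ℤ) {b y : ℕ → ℤ}
    (hb : ∀ ℓ : Fin τ, b ℓ = a ℓ) (hy : ∀ ℓ : Fin τ, y ℓ = x ℓ) (k : Fin τ) :
    ∑ ℓ, (if ℓ ≤ k then a ℓ else 0) * x ℓ = prefixSum b y (k + 1) := by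
  have hfilter : (range τ).filter (· ≤ (k : ℕ)) = range (k + 1) := by
    ext i; simp only [mem_filter, mem_range]; omega
  rw [prefixSum, ← hfilter, sum_filter,
    ← Fin.sum_univ_eq_sum_range (fun i => if i ≤ (k : ℕ) then b i * y i else 0)]
  refine sum_congr rfl fun ℓ _ => ?_
  simp only [ite_mul, zero_mul, hb, hy, Fin.le_def]

lemma mulVec_eq_zero_iff (hF₁ : ∀ k ℓ, F k (Sum.inl ℓ) = if ℓ ≤ k then a ℓ else 0)
    (hF₂ : ∀ k ℓ, F k (Sum.inr ℓ) = if ℓ = k then -1 else 0) {b y : ℕ → ℤ}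
    (hb : ∀ ℓ : Fin τ, b ℓ = a ℓ) {w : Fin τ ⊕ Fin τ → ℤ} (hy : ∀ ℓ : Fin τ, y ℓ = w (Sum.inl ℓ)) :
    F.mulVec w = 0 ↔ ∀ k : Fin τ, w (Sum.inr k) = prefixSum b y (k + 1) := by
  have hrow : ∀ k, F.mulVec w k = prefixSum b y (k + 1) - w (Sum.inr k) := by
    intro k
    simp only [Matrix.mulVec, dotProduct, Fintype.sum_sum_type, hF₁, hF₂,
      sum_ite_le_mul_eq_prefixSum a _ hb hy k]
    simp [sub_eq_add_neg]
  exact funext_iff.trans <| forall_congr' fun k => by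
    rw [hrow, Pi.zero_apply, sub_eq_zero, eq_comm]

theorem InGraver.prefixSum_le (ha : ∀ ℓ, 1 ≤ a ℓ ∧ a ℓ ≤ (τ : ℤ))
    (hF₁ : ∀ k ℓ, F k (Sum.inl ℓ) = if ℓ ≤ k then a ℓ else 0)
    (hF₂ : ∀ k ℓ, F k (Sum.inr ℓ) = if ℓ = k then -1 else 0) {w : Fin τ ⊕ Fin τ → ℤ}
    (hw : InGraver F w) {b x : ℕ → ℤ} (hb : ∀ ℓ : Fin τ, b ℓ = a ℓ)
    (hx : ∀ ℓ : Fin τ, x ℓ = w (Sum.inl ℓ)) (hx0 : ∀ i, τ ≤ i → x i = 0) {n : ℕ} (hn : n ≤ τ) :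
    prefixSum b x n ≤ (τ : ℤ) ^ 4 := by
  by_contra! hbig
  obtain ⟨y', hy', hP', hpos, hlt⟩ := exists_conformalTo_prefixSum_lt b
    (fun i hi => hb ⟨i, hi⟩ ▸ ha ⟨i, hi⟩) hx0 hn hbig
  obtain ⟨k, rfl⟩ : ∃ k, n = k + 1 :=
    Nat.exists_eq_succ_of_ne_zero fun h => by simp [h] at hpos
  have hz := (mulVec_eq_zero_iff hF₁ hF₂ hb hx).1 hw.2.1
  set w' : Fin τ ⊕ Fin τ → ℤ := Sum.elim (fun ℓ => y' ℓ) fun k => prefixSum b y' (k + 1)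
  have hw'ker : F.mulVec w' = 0 :=
    (mulVec_eq_zero_iff hF₁ hF₂ hb (fun _ => rfl)).2 fun _ => rfl
  have hw'w : ConformalTo w' w := by
    rintro (ℓ | ℓ)
    · simpa [w', hx] using hy' ℓ
    · simpa [w', hz] using hP' (ℓ + 1)
  have hw'0 : w' ≠ 0 := fun h => hpos.ne' (by simpa [w'] using congr_fun h (Sum.inr ⟨k, hn⟩))
  have := congr_fun (hw.2.2 w' hw'0 hw'ker hw'w) (Sum.inr ⟨k, hn⟩)
  simp only [w', Sum.elim_inr, hz] at this
  exact hlt.ne this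

theorem InGraver.abs_prefixSum_le (ha : ∀ ℓ, 1 ≤ a ℓ ∧ a ℓ ≤ (τ : ℤ))
    (hF₁ : ∀ k ℓ, F k (Sum.inl ℓ) = if ℓ ≤ k then a ℓ else 0)
    (hF₂ : ∀ k ℓ, F k (Sum.inr ℓ) = if ℓ = k then -1 else 0) {w : Fin τ ⊕ Fin τ → ℤ}
    (hw : InGraver F w) {b x : ℕ → ℤ} (hb : ∀ ℓ : Fin τ, b ℓ = a ℓ)
    (hx : ∀ ℓ : Fin τ, x ℓ = w (Sum.inl ℓ)) (hx0 : ∀ i, τ ≤ i → x i = 0) {n : ℕ} (hn : n ≤ τ) :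
    |prefixSum b x n| ≤ (τ : ℤ) ^ 4 := by
  have hneg := hw.neg.prefixSum_le ha hF₁ hF₂ hb (x := -x) (fun ℓ => by simp [hx])
    (fun i hi => by simp [hx0 i hi]) hn
  rw [prefixSum_neg, Pi.neg_apply] at hneg
  exact abs_le.2 ⟨by linarith, hw.prefixSum_le ha hF₁ hF₂ hb hx hx0 hn⟩

end LowerTriangular

theorem stmt0_general (τ : ℕ) (a : Fin τ → ℤ)
    (ha : ∀ ℓ, 1 ≤ a ℓ ∧ a ℓ ≤ (τ : ℤ))
    (F : Matrix (Fin τ) (Fin τ ⊕ Fin τ) ℤ)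
    (hF₁ : ∀ k ℓ, F k (Sum.inl ℓ) = if ℓ ≤ k then a ℓ else 0)
    (hF₂ : ∀ k ℓ, F k (Sum.inr ℓ) = if ℓ = k then -1 else 0)
    (g : Fin τ ⊕ Fin τ → ℤ) (hg : InGraver F g) :
    ∀ i, |g i| ≤ 3 * (τ : ℤ) ^ 4 := by
  set b : ℕ → ℤ := Function.extend Fin.val a 0
  set x : ℕ → ℤ := Function.extend Fin.val (g ∘ Sum.inl) 0
  have hb : ∀ ℓ : Fin τ, b ℓ = a ℓ := Fin.val_injective.extend_apply a 0
  have hx : ∀ ℓ : Fin τ, x ℓ = g (Sum.inl ℓ) := Fin.val_injective.extend_apply _ 0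
  have hx0 : ∀ i, τ ≤ i → x i = 0 := fun i hi =>
    Function.extend_apply' _ _ _ fun ⟨ℓ, hℓ⟩ => by omega
  have hP : ∀ n ≤ τ, |prefixSum b x n| ≤ (τ : ℤ) ^ 4 := fun n hn =>
    hg.abs_prefixSum_le ha hF₁ hF₂ hb hx hx0 hn
  have hτ4 : (0 : ℤ) ≤ τ ^ 4 := by positivity
  rintro (k | k)
  · have := abs_le_two_mul_of_abs_prefixSum_le b (hb k ▸ (ha k).1) (hP k k.isLt.le)
      (hP (k + 1) k.isLt)
    rw [← hx]
    linarith
  · rw [(mulVec_eq_zero_iff hF₁ hF₂ hb hx).1 hg.2.1 k]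
    linarith [hP (k + 1) k.isLt]

/-- Every Graver basis element of `F = (G | -I)` has ℓ∞-norm at most `3 τ⁴`. -/
theorem stmt0 (τ : ℕ) (hτ : 2 ≤ τ) (a : Fin τ → ℤ)
    (ha : ∀ ℓ, 1 ≤ a ℓ ∧ a ℓ ≤ (τ : ℤ))
    (F : Matrix (Fin τ) (Fin τ ⊕ Fin τ) ℤ)
    (hF₁ : ∀ k ℓ, F k (Sum.inl ℓ) = if ℓ ≤ k then a ℓ else 0)
    (hF₂ : ∀ k ℓ, F k (Sum.inr ℓ) = if ℓ = k then -1 else 0)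
    (g : Fin τ ⊕ Fin τ → ℤ) (hg : InGraver F g) :
    ∀ i, |g i| ≤ 3 * (τ : ℤ) ^ 4 :=
  stmt0_general τ a ha F hF₁ hF₂ g hg
end

section
/- Let τ ≥ 2, let a₁,…,a_τ ∈ ℤ with 1 ≤ a_k ≤ τ for all k, and let (x,z) ∈ ℤ^{2τ} satisfy z_k − z_{k−1} = a_k x_k for all k ∈ [τ] (with z₀ := 0). If there exists k with z_k − z_{k−1} > 2τ³ + 1 and z_k ≥ τ³ and moreover z_q ≥ τ for all q ∈ [k, τ], then the vector (g,h) defined by g_k = 1, h_k = h_{k+1} = ⋯ = h_τ = a_k, and all other coordinates zero, is a nonzero integer vector in the kernel of the same constraint system and is conformal to (x,z). -/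
/-!
The vector `(g, h)` is the unit step `e_k` in `x` lifted to the kernel by letting `z` jump by
`a k` at `k` and stay there. It is conformal to `(x, z)` because the large jump of `z` at `k`
forces `x k ≥ 1`, and the tail of `z` stays above `τ ≥ a k`.
-/

lemma nonneg_mul_and_abs_le_of_nonneg_of_le {u v : ℤ} (hu : 0 ≤ u) (huv : u ≤ v) :
    0 ≤ u * v ∧ |u| ≤ |v| :=
  ⟨mul_nonneg hu (hu.trans huv), by rwa [abs_of_nonneg hu, abs_of_nonneg (hu.trans huv)]⟩

lemma nonneg_mul_and_abs_le_of_ite {p : Prop} [Decidable p] {u v : ℤ}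
    (h : p → 0 ≤ u ∧ u ≤ v) : 0 ≤ (if p then u else 0) * v ∧ |if p then u else 0| ≤ |v| := by
  split_ifs with hp
  · exact nonneg_mul_and_abs_le_of_nonneg_of_le (h hp).1 (h hp).2
  · simp

lemma ite_Icc_sub_ite_Icc_pred {k τ q : ℕ} (c : ℤ) (hk : 1 ≤ k) (hq : 1 ≤ q) (hqτ : q ≤ τ) :
    ((if k ≤ q ∧ q ≤ τ then c else 0) - if k ≤ q - 1 ∧ q - 1 ≤ τ then c else 0) =
      if q = k then c else 0 := by
  rcases lt_trichotomy q k with hlt | rfl | hgt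
  · simp [show ¬k ≤ q by omega, show ¬k ≤ q - 1 by omega, hlt.ne]
  · simp [show ¬q ≤ q - 1 by omega, hqτ]
  · simp [show k ≤ q - 1 by omega, hqτ, hgt.ne', hgt.le, show q - 1 ≤ τ by omega]

theorem stmt2_general (τ : ℕ) (a x z : ℕ → ℤ)
    (ha : ∀ q ∈ Finset.Icc 1 τ, 1 ≤ a q ∧ a q ≤ (τ : ℤ))
    (hker : ∀ q ∈ Finset.Icc 1 τ, z q - z (q - 1) = a q * x q)
    (k : ℕ) (hk : k ∈ Finset.Icc 1 τ)
    (hbig : 2 * (τ : ℤ) ^ 3 + 1 < z k - z (k - 1))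
    (htail : ∀ q, k ≤ q → q ≤ τ → (τ : ℤ) ≤ z q) :
    let g : ℕ → ℤ := fun i => if i = k then 1 else 0
    let h : ℕ → ℤ := fun i => if k ≤ i ∧ i ≤ τ then a k else 0
    (¬ ∀ q ∈ Finset.Icc 1 τ, g q = 0 ∧ h q = 0) ∧
    h 0 = 0 ∧
    (∀ q ∈ Finset.Icc 1 τ, h q - h (q - 1) = a q * g q) ∧
    (∀ q ∈ Finset.Icc 1 τ, 0 ≤ g q * x q ∧ |g q| ≤ |x q|) ∧
    (∀ q ∈ Finset.Icc 1 τ, 0 ≤ h q * z q ∧ |h q| ≤ |z q|) := by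
  intro g h
  obtain ⟨hk1, hkτ⟩ := Finset.mem_Icc.mp hk
  obtain ⟨hak1, hakτ⟩ := ha k hk
  have hxk : 0 < x k :=
    pos_of_mul_pos_right (hker k hk ▸ lt_trans (by positivity) hbig) (by omega)
  refine ⟨fun H => by simpa [g] using (H k hk).1, if_neg (by omega), fun q hq => ?_,
    fun q _ => nonneg_mul_and_abs_le_of_ite fun hq => ?_,
    fun q _ => nonneg_mul_and_abs_le_of_ite fun hq => ⟨by omega, hakτ.trans (htail q hq.1 hq.2)⟩⟩
  · obtain ⟨hq1, hqτ⟩ := Finset.mem_Icc.mp hq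
    rw [ite_Icc_sub_ite_Icc_pred (a k) hk1 hq1 hqτ]
    split_ifs with hqk <;> simp [g, hqk]
  · subst hq; omega

/-- Hill-cutting, first case: if the step at `k` is large, `z k ≥ τ³`, and the tail of `z`
stays at least `τ`, then the vector `(g, h)` with `g k = 1`, `h k = ⋯ = h τ = a k` is a
nonzero kernel element of the constraint system conformal to `(x, z)`. -/
theorem stmt2 (τ : ℕ) (hτ : 2 ≤ τ) (a x z : ℕ → ℤ)
    (ha : ∀ q ∈ Finset.Icc 1 τ, 1 ≤ a q ∧ a q ≤ (τ : ℤ))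
    (hz0 : z 0 = 0)
    (hker : ∀ q ∈ Finset.Icc 1 τ, z q - z (q - 1) = a q * x q)
    (k : ℕ) (hk : k ∈ Finset.Icc 1 τ)
    (hbig : 2 * (τ : ℤ) ^ 3 + 1 < z k - z (k - 1))
    (hzk : (τ : ℤ) ^ 3 ≤ z k)
    (htail : ∀ q, k ≤ q → q ≤ τ → (τ : ℤ) ≤ z q) :
    let g : ℕ → ℤ := fun i => if i = k then 1 else 0
    let h : ℕ → ℤ := fun i => if k ≤ i ∧ i ≤ τ then a k else 0
    (¬ ∀ q ∈ Finset.Icc 1 τ, g q = 0 ∧ h q = 0) ∧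
    h 0 = 0 ∧
    (∀ q ∈ Finset.Icc 1 τ, h q - h (q - 1) = a q * g q) ∧
    (∀ q ∈ Finset.Icc 1 τ, 0 ≤ g q * x q ∧ |g q| ≤ |x q|) ∧
    (∀ q ∈ Finset.Icc 1 τ, 0 ≤ h q * z q ∧ |h q| ≤ |z q|) :=
  stmt2_general τ a x z ha hker k hk hbig htail
end

section
/- Let τ ≥ 2, let a₁,…,a_τ ∈ ℤ with 1 ≤ a_q ≤ τ for all q, and let (x,z) ∈ ℤ^{2τ} satisfy z_q − z_{q−1} = a_q x_q for all q (with z₀ := 0). Suppose z_k ≥ τ³ for some k, and there exists ℓ' > k with z_{ℓ'} < τ. Then there exists ℓ > k with x_ℓ < −τ, and taking ℓ minimal with this property, the vector (g,h) with g_k = a_ℓ, g_ℓ = −a_k, h_q = a_k·a_ℓ for k ≤ q ≤ ℓ−1, and all other coordinates zero, lies in the kernel of the constraint system and is conformal to (x,z), provided additionally a_k x_k ≥ τ³. -/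
/-!
Along the stretch after `k` where no `x j` drops below `-τ`, each step `z j - z (j - 1) = a j * x j`
loses at most `τ²`, and such a stretch has fewer than `τ` steps; so `z` stays at least
`τ³ - (τ - 1) τ² = τ²` there. Since `z` later falls below `τ`, some `x ℓ < -τ` must occur.
On `[k, ℓ)` the value `z ≥ τ² ≥ a k * a ℓ` dominates `h`, while `x k ≥ τ² ≥ a ℓ` and
`x ℓ < -τ ≤ -a k` dominate `g`.
-/

def hillCutG (a : ℕ → ℤ) (k ℓ : ℕ) (i : ℕ) : ℤ :=
  if i = k then a ℓ else if i = ℓ then -(a k) else 0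

def hillCutH (a : ℕ → ℤ) (k ℓ : ℕ) (i : ℕ) : ℤ :=
  if k ≤ i ∧ i ≤ ℓ - 1 then a k * a ℓ else 0

theorem sub_mul_le_of_forall_neg_le_sub (z : ℕ → ℤ) (c : ℤ) {k m : ℕ} (hkm : k ≤ m)
    (h : ∀ j, k < j → j ≤ m → -c ≤ z j - z (j - 1)) :
    z k - (m - k : ℕ) * c ≤ z m := by
  induction m, hkm using Nat.le_induction with
  | base => simp
  | succ n hkn ih =>
    have hstep := h (n + 1) (by omega) le_rfl
    have hih := ih fun j hkj hjn => h j hkj (by omega)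
    rw [Nat.add_sub_cancel] at hstep
    rw [show n + 1 - k = n - k + 1 by omega]
    push_cast
    linarith

theorem hillCutH_zero (a : ℕ → ℤ) {k : ℕ} (ℓ : ℕ) (hk : 1 ≤ k) : hillCutH a k ℓ 0 = 0 :=
  if_neg (by omega)

theorem hillCutH_sub (a : ℕ → ℤ) {k ℓ q : ℕ} (hkℓ : k < ℓ) (hq : 1 ≤ q) :
    hillCutH a k ℓ q - hillCutH a k ℓ (q - 1) = a q * hillCutG a k ℓ q := by
  unfold hillCutH hillCutG
  split_ifs <;> first | omega | (subst_vars; ring)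

theorem hillCutG_conformal {a x : ℕ → ℤ} {k ℓ : ℕ} (haℓ : 0 ≤ a ℓ) (hxk : a ℓ ≤ x k)
    (hak : 0 ≤ a k) (hxℓ : x ℓ ≤ -a k) (q : ℕ) :
    0 ≤ hillCutG a k ℓ q * x q ∧ |hillCutG a k ℓ q| ≤ |x q| := by
  unfold hillCutG
  split_ifs with hqk hqℓ
  · subst hqk
    rw [abs_of_nonneg haℓ, abs_of_nonneg (haℓ.trans hxk)]
    exact ⟨mul_nonneg haℓ (haℓ.trans hxk), hxk⟩
  · subst hqℓ
    rw [abs_neg, abs_of_nonneg hak, abs_of_nonpos (hxℓ.trans (neg_nonpos.mpr hak))]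
    exact ⟨by nlinarith, le_neg_of_le_neg hxℓ⟩
  · simp

theorem hillCutH_conformal {a z : ℕ → ℤ} {k ℓ : ℕ} (ha : 0 ≤ a k * a ℓ)
    (hz : ∀ q, k ≤ q → q ≤ ℓ - 1 → a k * a ℓ ≤ z q) (q : ℕ) :
    0 ≤ hillCutH a k ℓ q * z q ∧ |hillCutH a k ℓ q| ≤ |z q| := by
  unfold hillCutH
  split_ifs with hq
  · have hzq := hz q hq.1 hq.2
    rw [abs_of_nonneg ha, abs_of_nonneg (ha.trans hzq)]
    exact ⟨mul_nonneg ha (ha.trans hzq), hzq⟩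
  · simp
theorem sq_le_of_forall_neg_le {τ : ℕ} {a x z : ℕ → ℤ}
    (ha : ∀ q ∈ Finset.Icc 1 τ, 1 ≤ a q ∧ a q ≤ (τ : ℤ))
    (hker : ∀ q ∈ Finset.Icc 1 τ, z q - z (q - 1) = a q * x q)
    {k m : ℕ} (hk : 1 ≤ k) (hzk : (τ : ℤ) ^ 3 ≤ z k) (hkm : k ≤ m) (hmτ : m ≤ τ)
    (hx : ∀ j, k < j → j ≤ m → -(τ : ℤ) ≤ x j) :
    (τ : ℤ) ^ 2 ≤ z m := by
  have hdescent := sub_mul_le_of_forall_neg_le_sub z ((τ : ℤ) ^ 2) hkm fun j hkj hjm => by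
    have hj : j ∈ Finset.Icc 1 τ := Finset.mem_Icc.mpr ⟨by omega, by omega⟩
    obtain ⟨ha1, haτ⟩ := ha j hj
    have hxj := hx j hkj hjm
    rw [hker j hj]
    nlinarith
  have hlen : ((m - k : ℕ) : ℤ) ≤ τ - 1 := by omega
  nlinarith [mul_le_mul_of_nonneg_right hlen (sq_nonneg (τ : ℤ))]

theorem stmt3_general (τ : ℕ) (a x z : ℕ → ℤ)
    (ha : ∀ q ∈ Finset.Icc 1 τ, 1 ≤ a q ∧ a q ≤ (τ : ℤ))
    (hker : ∀ q ∈ Finset.Icc 1 τ, z q - z (q - 1) = a q * x q)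
    (k : ℕ) (hk : k ∈ Finset.Icc 1 τ)
    (hzk : (τ : ℤ) ^ 3 ≤ z k)
    (hdrop : ∃ ℓ', k < ℓ' ∧ ℓ' ≤ τ ∧ z ℓ' < (τ : ℤ))
    (hxk : (τ : ℤ) ^ 3 ≤ a k * x k) :
    ∃ ℓ, (k < ℓ ∧ ℓ ≤ τ ∧ x ℓ < -(τ : ℤ)) ∧
      (∀ ℓ'', k < ℓ'' → ℓ'' < ℓ → ¬ (x ℓ'' < -(τ : ℤ))) ∧
      (let g : ℕ → ℤ := fun i => if i = k then a ℓ else if i = ℓ then -(a k) else 0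
       let h : ℕ → ℤ := fun i => if k ≤ i ∧ i ≤ ℓ - 1 then a k * a ℓ else 0
       h 0 = 0 ∧
       (∀ q ∈ Finset.Icc 1 τ, h q - h (q - 1) = a q * g q) ∧
       (∀ q ∈ Finset.Icc 1 τ, 0 ≤ g q * x q ∧ |g q| ≤ |x q|) ∧
       (∀ q ∈ Finset.Icc 1 τ, 0 ≤ h q * z q ∧ |h q| ≤ |z q|)) := by
  obtain ⟨hk1, hkτ⟩ := Finset.mem_Icc.mp hk
  have hex : ∃ ℓ, k < ℓ ∧ ℓ ≤ τ ∧ x ℓ < -(τ : ℤ) := by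
    obtain ⟨ℓ', hkℓ', hℓ'τ, hzℓ'⟩ := hdrop
    by_contra! hnone
    have hzℓ'_ge := sq_le_of_forall_neg_le ha hker hk1 hzk hkℓ'.le hℓ'τ
      fun j hkj hjℓ' => hnone j hkj (hjℓ'.trans hℓ'τ)
    nlinarith
  set ℓ := Nat.find hex
  obtain ⟨hkℓ, hℓτ, hxℓ⟩ : k < ℓ ∧ ℓ ≤ τ ∧ x ℓ < -(τ : ℤ) := Nat.find_spec hex
  have hmin : ∀ j, k < j → j < ℓ → ¬ x j < -(τ : ℤ) := fun j hkj hjℓ hxj =>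
    Nat.find_min hex hjℓ ⟨hkj, by omega, hxj⟩
  obtain ⟨hak1, hakτ⟩ := ha k hk
  obtain ⟨haℓ1, haℓτ⟩ := ha ℓ (Finset.mem_Icc.mpr ⟨by omega, hℓτ⟩)
  have hxk_ge : (τ : ℤ) ^ 2 ≤ x k := by nlinarith
  have hz_ge : ∀ q, k ≤ q → q ≤ ℓ - 1 → a k * a ℓ ≤ z q := fun q hkq hqℓ => by
    have := sq_le_of_forall_neg_le ha hker hk1 hzk hkq (by omega)
      fun j hkj hjq => not_lt.mp (hmin j hkj (by omega))
    nlinarith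
  refine ⟨ℓ, ⟨hkℓ, hℓτ, hxℓ⟩, hmin, ?_⟩
  intro g h
  exact ⟨hillCutH_zero a ℓ hk1,
    fun q hq => hillCutH_sub a hkℓ (Finset.mem_Icc.mp hq).1,
    fun q _ => hillCutG_conformal (by omega) (by nlinarith) (by omega) (by omega) q,
    fun q _ => hillCutH_conformal (by positivity) hz_ge q⟩

/-- Hill-cutting, second case: if `z k ≥ τ³` (with `a k · x k ≥ τ³`) and `z` later drops
below `τ`, then there is a minimal `ℓ > k` with `x ℓ < -τ`, and the corresponding
vector `(g, h)` is a kernel element conformal to `(x, z)`. -/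
theorem stmt3 (τ : ℕ) (hτ : 2 ≤ τ) (a x z : ℕ → ℤ)
    (ha : ∀ q ∈ Finset.Icc 1 τ, 1 ≤ a q ∧ a q ≤ (τ : ℤ))
    (hz0 : z 0 = 0)
    (hker : ∀ q ∈ Finset.Icc 1 τ, z q - z (q - 1) = a q * x q)
    (k : ℕ) (hk : k ∈ Finset.Icc 1 τ)
    (hzk : (τ : ℤ) ^ 3 ≤ z k)
    (hdrop : ∃ ℓ', k < ℓ' ∧ ℓ' ≤ τ ∧ z ℓ' < (τ : ℤ))
    (hxk : (τ : ℤ) ^ 3 ≤ a k * x k) :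
    ∃ ℓ, (k < ℓ ∧ ℓ ≤ τ ∧ x ℓ < -(τ : ℤ)) ∧
      (∀ ℓ'', k < ℓ'' → ℓ'' < ℓ → ¬ (x ℓ'' < -(τ : ℤ))) ∧
      (let g : ℕ → ℤ := fun i => if i = k then a ℓ else if i = ℓ then -(a k) else 0
       let h : ℕ → ℤ := fun i => if k ≤ i ∧ i ≤ ℓ - 1 then a k * a ℓ else 0
       h 0 = 0 ∧
       (∀ q ∈ Finset.Icc 1 τ, h q - h (q - 1) = a q * g q) ∧
       (∀ q ∈ Finset.Icc 1 τ, 0 ≤ g q * x q ∧ |g q| ≤ |x q|) ∧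
       (∀ q ∈ Finset.Icc 1 τ, 0 ≤ h q * z q ∧ |h q| ≤ |z q|)) :=
  stmt3_general τ a x z ha hker k hk hzk hdrop hxk
end

section
/- Let f : ℝ^{2t} → ℝ be a separable quadratic function f(x) = Σ_{ℓ} (α_ℓ x_ℓ² + β_ℓ x_ℓ). Suppose f̃(x) = Σ_ℓ (α̃_ℓ x_ℓ² + β̃_ℓ x_ℓ) is equivalent to f on [−1,2]^{2t} (meaning f(x) ≤ f(y) ⟺ f̃(x) ≤ f̃(y) for all integer points x, y in [−1,2]^{2t}), and suppose α_j = α_k and β_j = β_k for two fixed coordinates j ≠ k. Then β̃_j = β̃_k and α̃_j = α̃_k. -/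
/-!
If `f` has the same coefficients at `j` and `k`, it takes the same value at a point and at the
point with its `j`- and `k`-coordinates swapped, so an equivalent `f̃` must do so as well. For the
point `a e_j + b e_k` this says `(α̃_j - α̃_k)(a² - b²) + (β̃_j - β̃_k)(a - b) = 0`; the choice
`(a, b) = (1, -1)` gives `β̃_j = β̃_k`, and then `(a, b) = (2, 1)` gives `α̃_j = α̃_k`.
-/

def OrderEquivalentOn {X α β : Type*} [LE α] [LE β] (f : X → α) (g : X → β) (P : Set X) : Prop :=
  ∀ x ∈ P, ∀ y ∈ P, f x ≤ f y ↔ g x ≤ g y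

theorem OrderEquivalentOn.eq_of_eq {X α β : Type*} [Preorder α] [PartialOrder β]
    {f : X → α} {g : X → β} {P : Set X} (h : OrderEquivalentOn f g P) {x y : X}
    (hx : x ∈ P) (hy : y ∈ P) (hfxy : f x = f y) : g x = g y :=
  le_antisymm ((h x hx y hy).mp hfxy.le) ((h y hy x hx).mp hfxy.ge)

section SingleAddSingle

variable {ι M : Type*} [DecidableEq ι] {j k : ι}

theorem single_add_single_apply_mem [AddZeroClass M] {s : Set M} (hjk : j ≠ k) {a b : M}
    (h0 : 0 ∈ s) (ha : a ∈ s) (hb : b ∈ s) (i : ι) :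
    (Pi.single j a + Pi.single k b : ι → M) i ∈ s := by
  by_cases hij : i = j
  · subst hij; simpa [hjk] using ha
  by_cases hik : i = k
  · subst hik; simpa [hij] using hb
  simpa [hij, hik] using h0

theorem sum_quadratic_single_add_single [Fintype ι] (α β : ι → ℝ) (hjk : j ≠ k) (a b : ℤ) :
    ∑ ℓ, (α ℓ * ((Pi.single j a + Pi.single k b : ι → ℤ) ℓ : ℝ) ^ 2 +
      β ℓ * ((Pi.single j a + Pi.single k b : ι → ℤ) ℓ : ℝ)) =
      α j * (a : ℝ) ^ 2 + β j * a + (α k * (b : ℝ) ^ 2 + β k * b) := by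
  rw [Fintype.sum_eq_add j k hjk]
  · simp [hjk, hjk.symm]
  · rintro ℓ ⟨hℓj, hℓk⟩
    simp [hℓj, hℓk]

end SingleAddSingle

/-- If a separable quadratic `f̃` is equivalent to `f` on the integer points of
`[-1,2]^{2t}` and `f` has identical coefficients at coordinates `j ≠ k`, then so
does `f̃`. -/
theorem stmt5 (t : ℕ) (α β αt βt : Fin (2 * t) → ℝ) (j k : Fin (2 * t)) (hjk : j ≠ k)
    (hα : α j = α k) (hβ : β j = β k)
    (f ft : (Fin (2 * t) → ℝ) → ℝ)
    (hf : ∀ v, f v = ∑ ℓ, (α ℓ * (v ℓ) ^ 2 + β ℓ * v ℓ))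
    (hft : ∀ v, ft v = ∑ ℓ, (αt ℓ * (v ℓ) ^ 2 + βt ℓ * v ℓ))
    (hequiv : ∀ x y : Fin (2 * t) → ℤ,
      (∀ i, -1 ≤ x i ∧ x i ≤ 2) → (∀ i, -1 ≤ y i ∧ y i ≤ 2) →
      (f (fun i => (x i : ℝ)) ≤ f (fun i => (y i : ℝ)) ↔
       ft (fun i => (x i : ℝ)) ≤ ft (fun i => (y i : ℝ)))) :
    βt j = βt k ∧ αt j = αt k := by
  have hequivOn : OrderEquivalentOn (fun x : Fin (2 * t) → ℤ => f fun i => (x i : ℝ))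
      (fun x => ft fun i => (x i : ℝ)) {x | ∀ i, x i ∈ Set.Icc (-1) 2} :=
    fun x hx y hy => hequiv x y hx hy
  have swap_eq (a b : ℤ) (ha : a ∈ Set.Icc (-1) 2) (hb : b ∈ Set.Icc (-1) 2) :
      αt j * (a : ℝ) ^ 2 + βt j * a + (αt k * (b : ℝ) ^ 2 + βt k * b) =
        αt j * (b : ℝ) ^ 2 + βt j * b + (αt k * (a : ℝ) ^ 2 + βt k * a) := by
    have := hequivOn.eq_of_eq (single_add_single_apply_mem hjk (by norm_num) ha hb)
      (single_add_single_apply_mem hjk (by norm_num) hb ha) <| by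
        simp only [hf, sum_quadratic_single_add_single α β hjk, hα, hβ]
        ring
    simpa only [hft, sum_quadratic_single_add_single αt βt hjk] using this
  have hβt : βt j = βt k := by
    have := swap_eq 1 (-1) (by norm_num) (by norm_num)
    push_cast at this
    linarith
  have := swap_eq 2 1 (by norm_num) (by norm_num)
  push_cast at this
  exact ⟨hβt, by linarith⟩
end

section
/- Let X ⊆ ℕ^d be a finite set of nonnegative integer vectors and b ∈ cone_ℕ(X), i.e., b = Σ_{x∈X} λ_x x for some λ ∈ ℕ^X. Then there exists a subset X̃ ⊆ X with b ∈ cone_ℕ(X̃) and |X̃| ≤ ⟨b⟩, where ⟨b⟩ = Σᵢ (1 + ⌈log₂(bᵢ + 1)⌉) is the binary encoding length of b. -/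
/-!
Take a subset `U ⊆ X` that is inclusion-minimal among those whose integer cone contains `b`,
with `b = ∑ μ x • x` over `U`. If two distinct subsets `S, T ⊆ U` had the same sum, then,
with `m` the least coefficient `μ y` over `y ∈ T \ S`, shifting `m` units of weight from
`T` to `S` would represent `b` without `y`. Hence the `2 ^ |U|` subset sums of `U` are
distinct; since every `μ x ≥ 1`, they all lie in the box `[0, b]`, which has
`∏ (bᵢ + 1) ≤ 2 ^ ∑ ⌈log₂ (bᵢ + 1)⌉` points.
-/

open Finset

def intCone {M : Type*} [AddCommMonoid M] (S : Finset M) : Set M :=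
  {b | ∃ μ : M → ℕ, b = ∑ x ∈ S, μ x • x}

section AddCommMonoid

variable {M : Type*} [AddCommMonoid M] [DecidableEq M]

theorem sum_add_ite_mem_smul {S U : Finset M} (hSU : S ⊆ U) (f : M → ℕ) (m : ℕ) :
    ∑ x ∈ U, (f x + if x ∈ S then m else 0) • x = ∑ x ∈ U, f x • x + m • ∑ x ∈ S, x := by
  simp_rw [add_smul, sum_add_distrib, ite_smul, zero_smul, sum_ite_mem,
    inter_eq_right.mpr hSU, smul_sum]

theorem notMem_intCone_erase_of_minimal {b : M} {U : Finset M}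
    (hU : Minimal (b ∈ intCone ·) U) {y : M} (hy : y ∈ U) : b ∉ intCone (U.erase y) :=
  hU.not_prop_of_lt (erase_ssubset hy)

theorem coeff_ne_zero_of_minimal {b : M} {U : Finset M} (hU : Minimal (b ∈ intCone ·) U)
    {μ : M → ℕ} (hμ : b = ∑ x ∈ U, μ x • x) {y : M} (hy : y ∈ U) : μ y ≠ 0 := by
  intro h
  refine notMem_intCone_erase_of_minimal hU hy ⟨μ, ?_⟩
  rw [sum_erase _ (by rw [h, zero_smul])]
  exact hμ

end AddCommMonoid

section AddCancelCommMonoid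

variable {M : Type*} [AddCancelCommMonoid M] [DecidableEq M]

theorem exists_mem_intCone_erase_of_sum_eq {b : M} {U S T : Finset M} (hb : b ∈ intCone U)
    (hS : S ⊆ U) (hT : T ⊆ U) (hTS : (T \ S).Nonempty) (hsum : ∑ x ∈ S, x = ∑ x ∈ T, x) :
    ∃ y ∈ U, b ∈ intCone (U.erase y) := by
  obtain ⟨μ, rfl⟩ := hb
  obtain ⟨y, hy, hy_min⟩ := (T \ S).exists_min_image μ hTS
  obtain ⟨hyT, hyS⟩ := mem_sdiff.mp hy
  set m := μ y
  set ν : M → ℕ := fun x => μ x + (if x ∈ S then m else 0) - (if x ∈ T then m else 0)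
  have hν : ∀ x, ν x + (if x ∈ T then m else 0) = μ x + (if x ∈ S then m else 0) := by
    intro x
    refine Nat.sub_add_cancel ?_
    by_cases hxT : x ∈ T
    · by_cases hxS : x ∈ S
      · simp [hxT, hxS]
      · simpa [hxT, hxS] using hy_min x (mem_sdiff.mpr ⟨hxT, hxS⟩)
    · simp [hxT]
  refine ⟨y, hT hyT, ν, ?_⟩
  rw [sum_erase _ (by simp [ν, m, hyT, hyS])]
  apply add_right_cancel (b := m • ∑ x ∈ S, x)
  rw [← sum_add_ite_mem_smul hS, hsum, ← sum_add_ite_mem_smul hT]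
  simp_rw [hν]

theorem injOn_sum_powerset_of_minimal {b : M} {U : Finset M}
    (hU : Minimal (b ∈ intCone ·) U) :
    Set.InjOn (fun S : Finset M => ∑ x ∈ S, x) (U.powerset : Set (Finset M)) := by
  intro S hS T hT hST
  simp only [coe_powerset, Set.mem_preimage, Set.mem_powerset_iff, coe_subset] at hS hT
  by_contra hne
  obtain ⟨y, hy, hby⟩ : ∃ y ∈ U, b ∈ intCone (U.erase y) := by
    by_cases hTS : T ⊆ S
    · exact exists_mem_intCone_erase_of_sum_eq hU.prop hT hS
        (sdiff_nonempty.mpr fun hST' => hne (hST'.antisymm hTS)) hST.symm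
    · exact exists_mem_intCone_erase_of_sum_eq hU.prop hS hT (sdiff_nonempty.mpr hTS) hST
  exact notMem_intCone_erase_of_minimal hU hy hby

end AddCancelCommMonoid

theorem sum_le_of_minimal {M : Type*} [AddCommMonoid M] [PartialOrder M]
    [CanonicallyOrderedAdd M] [DecidableEq M] {b : M} {U : Finset M}
    (hU : Minimal (b ∈ intCone ·) U) : ∑ x ∈ U, x ≤ b := by
  obtain ⟨μ, hμ⟩ := hU.prop
  rw [hμ]
  refine sum_le_sum fun x hx => ?_
  obtain ⟨k, hk⟩ := Nat.exists_eq_succ_of_ne_zero (coeff_ne_zero_of_minimal hU hμ hx)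
  rw [hk, succ_nsmul]
  exact le_add_self

theorem card_le_sum_clog_of_injOn_sum {d : ℕ} {U : Finset (Fin d → ℕ)} {b : Fin d → ℕ}
    (hinj : Set.InjOn (fun S : Finset (Fin d → ℕ) => ∑ x ∈ S, x)
      (U.powerset : Set (Finset (Fin d → ℕ)))) (hle : ∑ x ∈ U, x ≤ b) :
    U.card ≤ ∑ i, Nat.clog 2 (b i + 1) := by
  classical
  have hmaps : Set.MapsTo (fun S : Finset (Fin d → ℕ) => ∑ x ∈ S, x)
      (U.powerset : Set (Finset (Fin d → ℕ))) (Iic b : Set (Fin d → ℕ)) := fun S hS =>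
    mem_Iic.mpr ((sum_le_sum_of_subset (mem_powerset.mp hS)).trans hle)
  have hcard := card_le_card_of_injOn _ hmaps hinj
  rw [card_powerset, Pi.card_Iic] at hcard
  simp only [Nat.card_Iic] at hcard
  refine (Nat.pow_le_pow_iff_right one_lt_two).mp (hcard.trans ?_)
  rw [← prod_pow_eq_pow_sum]
  exact prod_le_prod' fun i _ => Nat.le_pow_clog one_lt_two _

/-- Eisenbrand–Shmonin, part 1: a vector in the integer cone of a finite set of
nonnegative integer vectors is in the integer cone of a subset of size at most the
binary encoding length `⟨b⟩ = Σᵢ (1 + ⌈log₂(bᵢ+1)⌉)`. -/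
theorem stmt7 (d : ℕ) (X : Finset (Fin d → ℕ)) (b : Fin d → ℕ)
    (lam : (Fin d → ℕ) → ℕ) (hb : b = ∑ x ∈ X, lam x • x) :
    ∃ Xt ⊆ X, (∃ mu : (Fin d → ℕ) → ℕ, b = ∑ x ∈ Xt, mu x • x) ∧
      Xt.card ≤ ∑ i, (1 + Nat.clog 2 (b i + 1)) := by
  classical
  obtain ⟨U, hUX, hU⟩ := exists_minimal_le_of_wellFoundedLT (b ∈ intCone ·) X ⟨lam, hb⟩
  refine ⟨U, hUX, hU.prop, ?_⟩
  calc U.card ≤ ∑ i, Nat.clog 2 (b i + 1) :=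
        card_le_sum_clog_of_injOn_sum (injOn_sum_powerset_of_minimal hU) (sum_le_of_minimal hU)
    _ ≤ ∑ i, (1 + Nat.clog 2 (b i + 1)) := sum_le_sum fun i _ => Nat.le_add_left _ _
end

section
/- For any integer matrix A ∈ ℤ^{m×n}, every Graver basis element g ∈ G(A) satisfies ‖g‖₁ ≤ (2‖A‖_∞ · m + 1)^m. -/
/-!
Write `g` as `T = ∑ i, |g i|` signed columns `sign (g i) • Aᵀ i`; they sum to `A *ᵥ g = 0`.
By a Steinitz-type argument they can be ordered so that every prefix sum lies in the box
`[-m‖A‖∞, m‖A‖∞]^m`. Going down from the full set, a set `S` of columns carries weights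
`μ ∈ [0,1]^S` of mass `|S| - m` annihilating the columns, so `∑_S v = ∑_S (1 - μ) v` is short.
Rescaling `μ` to mass `|S| - 1 - m` and passing to a vertex of the polytope of such weights
(at most `m + 1` fractional coordinates) produces a zero weight: that column is dropped.
If `T` exceeded the `(2m‖A‖∞ + 1)^m` points of the box, two prefix sums would coincide, and the
columns between them would form a nonzero kernel element conformal to and smaller than `g`.
-/

open Finset Module

section FewFractional

variable {K : Type*} [Field K] [LinearOrder K]

/-- The time at which `a + t * e` leaves `[0, 1]`. -/
def exitTime (a e : K) : K := if 0 < e then (1 - a) / e else -a / e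

lemma add_exitTime_mul_eq_zero_or_one (a : K) {e : K} (he : e ≠ 0) :
    a + exitTime a e * e = 0 ∨ a + exitTime a e * e = 1 := by
  unfold exitTime
  split_ifs
  · right; field_simp; ring
  · left; field_simp; ring

variable [IsStrictOrderedRing K]

lemma exitTime_nonneg {a : K} (ha : a ∈ Set.Icc 0 1) (e : K) : 0 ≤ exitTime a e := by
  unfold exitTime
  split_ifs with he
  · exact div_nonneg (by linarith [ha.2]) he.le
  · exact div_nonneg_of_nonpos (by linarith [ha.1]) (not_lt.1 he)

lemma add_mul_mem_Icc_of_le_exitTime {a e t : K} (ha : a ∈ Set.Icc 0 1) (ht₀ : 0 ≤ t)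
    (ht : t ≤ exitTime a e) : a + t * e ∈ Set.Icc 0 1 := by
  unfold exitTime at ht
  obtain ⟨ha₀, ha₁⟩ := ha
  split_ifs at ht with he
  · have : t * e ≤ 1 - a := (le_div_iff₀ he).1 ht
    constructor <;> nlinarith
  · rcases (not_lt.1 he).lt_or_eq with he | rfl
    · have : -a ≤ t * e := (le_div_iff_of_neg he).1 ht
      constructor <;> nlinarith
    · simpa using And.intro ha₀ ha₁

variable {ι W : Type*} [AddCommGroup W] [Module K W]

def fractionalIndices (s : Finset ι) (μ : ι → K) : Finset ι := {x ∈ s | μ x ∈ Set.Ioo 0 1}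

/-- Move along a linear dependence among the fractional coordinates until the first of them
reaches `0` or `1`. -/
lemma exists_card_fractionalIndices_lt [FiniteDimensional K W] {s : Finset ι} (w : ι → W)
    {μ : ι → K} (hμ : ∀ x ∈ s, μ x ∈ Set.Icc 0 1)
    (hcard : finrank K W < #(fractionalIndices s μ)) :
    ∃ μ' : ι → K, (∀ x ∈ s, μ' x ∈ Set.Icc 0 1) ∧ ∑ x ∈ s, μ' x • w x = ∑ x ∈ s, μ x • w x ∧
      #(fractionalIndices s μ') < #(fractionalIndices s μ) := by
  classical
  set F := fractionalIndices s μ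
  have hdep : ¬LinearIndepOn K w (F : Set ι) := fun h ↦ by
    have := h.linearIndependent.fintype_card_le_finrank
    simp only [Finset.coe_sort_coe, Fintype.card_coe] at this
    omega
  obtain ⟨ε, hε, x₀, hx₀F, hx₀⟩ := not_linearIndepOn_finset_iff.1 hdep
  obtain ⟨y, hy, hy_min⟩ := exists_min_image {x ∈ F | ε x ≠ 0}
    (fun x ↦ exitTime (μ x) (ε x)) ⟨x₀, mem_filter.2 ⟨hx₀F, hx₀⟩⟩
  obtain ⟨hyF, hεy⟩ := mem_filter.1 hy
  set t := exitTime (μ y) (ε y)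
  have hFs : F ⊆ s := filter_subset _ _
  have ht₀ : 0 ≤ t := exitTime_nonneg (hμ y (hFs hyF)) _
  set μ' : ι → K := fun x ↦ μ x + t * if x ∈ F then ε x else 0 with hμ'
  have hμ'_out {x} (hx : x ∉ F) : μ' x = μ x := by simp [hμ', hx]
  refine ⟨μ', fun x hx ↦ ?_, ?_, ?_⟩
  · by_cases hxF : x ∈ F
    · by_cases hεx : ε x = 0
      · simpa [hμ', hεx] using hμ x hx
      · simpa [hμ', hxF] using add_mul_mem_Icc_of_le_exitTime (hμ x hx) ht₀
          (hy_min x (mem_filter.2 ⟨hxF, hεx⟩))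
    · simpa [hμ'_out hxF] using hμ x hx
  · have : ∑ x ∈ s, (if x ∈ F then ε x else 0) • w x = 0 := by
      simp only [ite_smul, zero_smul]
      rw [sum_ite_mem, inter_eq_right.2 hFs, hε]
    simp only [hμ', add_smul, mul_smul, sum_add_distrib, ← smul_sum, this, smul_zero, add_zero]
  · refine card_lt_card ((ssubset_iff_of_subset ?_).2 ⟨y, hyF, ?_⟩)
    · intro x hx
      obtain ⟨hxs, hx01⟩ := mem_filter.1 hx
      by_contra hxF
      exact hxF (mem_filter.2 ⟨hxs, hμ'_out hxF ▸ hx01⟩)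
    · intro hy'
      have hbd := add_exitTime_mul_eq_zero_or_one (μ y) hεy
      have : μ' y ∈ Set.Ioo 0 1 := (mem_filter.1 hy').2
      simp only [hμ', hyF, if_true] at this
      rcases hbd with h | h <;> rw [h] at this <;> simp at this

theorem exists_card_fractionalIndices_le_finrank [FiniteDimensional K W] (s : Finset ι)
    (w : ι → W) {μ : ι → K} (hμ : ∀ x ∈ s, μ x ∈ Set.Icc 0 1) :
    ∃ μ' : ι → K, (∀ x ∈ s, μ' x ∈ Set.Icc 0 1) ∧ ∑ x ∈ s, μ' x • w x = ∑ x ∈ s, μ x • w x ∧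
      #(fractionalIndices s μ') ≤ finrank K W := by
  induction hk : #(fractionalIndices s μ) using Nat.strong_induction_on generalizing μ with
  | _ k ih =>
    by_cases hle : #(fractionalIndices s μ) ≤ finrank K W
    · exact ⟨μ, hμ, rfl, hle⟩
    obtain ⟨μ₁, hμ₁, hsum₁, hlt⟩ := exists_card_fractionalIndices_lt w hμ (not_le.1 hle)
    obtain ⟨μ', hμ', hsum', hcard'⟩ := ih _ (hk ▸ hlt) hμ₁ rfl
    exact ⟨μ', hμ', hsum'.trans hsum₁, hcard'⟩

lemma exists_eq_zero_of_sum_le [DecidableEq ι] {s : Finset ι} (hs : s.Nonempty) {μ : ι → K}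
    {d : ℕ} (hμ : ∀ x ∈ s, μ x ∈ Set.Icc 0 1) (hfrac : #(fractionalIndices s μ) ≤ d + 1)
    (hsum : ∑ x ∈ s, μ x ≤ ((#s - (d + 1) : ℕ) : K)) : ∃ x ∈ s, μ x = 0 := by
  by_contra! hne
  set F := fractionalIndices s μ
  have hFs : F ⊆ s := filter_subset _ _
  have hpos : ∀ x ∈ s, 0 < μ x := fun x hx ↦ (hμ x hx).1.lt_of_ne (hne x hx).symm
  have hone : ∀ x ∈ s \ F, μ x = 1 := fun x hx ↦ by
    obtain ⟨hxs, hxF⟩ := mem_sdiff.1 hx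
    by_contra h1
    exact hxF (mem_filter.2 ⟨hxs, hpos x hxs, (hμ x hxs).2.lt_of_ne h1⟩)
  have hsplit : ∑ x ∈ s, μ x = #(s \ F) + ∑ x ∈ F, μ x := by
    rw [← sum_sdiff hFs, sum_congr rfl hone, sum_const, nsmul_one]
  have hcard : #s - (d + 1) ≤ #(s \ F) := by
    rw [card_sdiff_of_subset hFs]
    omega
  rcases F.eq_empty_or_nonempty with hF | hF
  · rw [hsplit, hF, sdiff_empty, sum_empty, add_zero, Nat.cast_le] at hsum
    have := hs.card_pos
    omega
  · have : (0 : K) < ∑ x ∈ F, μ x := sum_pos (fun x hx ↦ hpos x (hFs hx)) hF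
    have : ((#s - (d + 1) : ℕ) : K) ≤ #(s \ F) := by exact_mod_cast hcard
    linarith

end FewFractional

section Steinitz

variable (K : Type*) {ι W : Type*} [Field K] [LinearOrder K] [IsStrictOrderedRing K]
  [AddCommGroup W] [Module K W]

/-- Weights `μ` certifying that `∑ x ∈ S, v x = ∑ x ∈ S, (1 - μ x) • v x` is a combination of
the `v x` with coefficients in `[0, 1]` of total mass at most `dim W`. -/
def HasSteinitzWeights (v : ι → W) (S : Finset ι) : Prop :=
  ∃ μ : ι → K, (∀ x ∈ S, μ x ∈ Set.Icc 0 1) ∧ ∑ x ∈ S, μ x = ((#S - finrank K W : ℕ) : K) ∧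
    ∑ x ∈ S, μ x • v x = 0

variable {K}

lemma hasSteinitzWeights_of_sum_eq_zero {v : ι → W} {S : Finset ι} (h : ∑ x ∈ S, v x = 0) :
    HasSteinitzWeights K v S := by
  refine ⟨fun _ ↦ ((#S - finrank K W : ℕ) : K) / #S, fun x _ ↦ ⟨by positivity, ?_⟩, ?_, ?_⟩
  · exact div_le_one_of_le₀ (by exact_mod_cast Nat.sub_le _ _) (by positivity)
  · rcases S.eq_empty_or_nonempty with rfl | hS
    · simp
    · rw [sum_const, nsmul_eq_mul, mul_div_cancel₀]
      exact_mod_cast hS.card_pos.ne'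
  · rw [← smul_sum, h, smul_zero]

lemma HasSteinitzWeights.abs_map_sum_le {v : ι → W} {S : Finset ι} (h : HasSteinitzWeights K v S)
    (φ : W →ₗ[K] K) {a : K} (ha : 0 ≤ a) (hφ : ∀ x ∈ S, |φ (v x)| ≤ a) :
    |φ (∑ x ∈ S, v x)| ≤ finrank K W * a := by
  obtain ⟨μ, hμ, hμsum, hμv⟩ := h
  have hφμ : ∑ x ∈ S, μ x * φ (v x) = 0 := by simpa [map_sum] using congrArg φ hμv
  have hmass : (#S : K) - ((#S - finrank K W : ℕ) : K) ≤ finrank K W := by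
    rw [← Nat.cast_sub (Nat.sub_le _ _), Nat.cast_le]
    omega
  calc |φ (∑ x ∈ S, v x)| = |∑ x ∈ S, (1 - μ x) * φ (v x)| := by
        simp only [map_sum, sub_mul, one_mul, sum_sub_distrib, hφμ, sub_zero]
    _ ≤ ∑ x ∈ S, (1 - μ x) * a := by
        refine (abs_sum_le_sum_abs _ _).trans (sum_le_sum fun x hx ↦ ?_)
        rw [abs_mul, abs_of_nonneg (sub_nonneg.2 (hμ x hx).2)]
        exact mul_le_mul_of_nonneg_left (hφ x hx) (sub_nonneg.2 (hμ x hx).2)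
    _ = (#S - ((#S - finrank K W : ℕ) : K)) * a := by
        rw [← sum_mul, sum_sub_distrib, hμsum, sum_const, nsmul_one]
    _ ≤ finrank K W * a := mul_le_mul_of_nonneg_right hmass ha

lemma HasSteinitzWeights.exists_erase [DecidableEq ι] [FiniteDimensional K W] {v : ι → W}
    {S : Finset ι} (h : HasSteinitzWeights K v S) (hS : S.Nonempty) :
    ∃ x ∈ S, HasSteinitzWeights K v (S.erase x) := by
  obtain ⟨μ, hμ, hμsum, hμv⟩ := h
  set d := finrank K W
  set c : K := ((#S - 1 - d : ℕ) : K)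
  -- rescales the mass from `#S - d` to `#S - 1 - d`; if `#S ≤ d` both vanish and `f = 0 / 0 = 0`
  set f : K := c / ((#S - d : ℕ) : K)
  have hcS : c ≤ ((#S - d : ℕ) : K) := by simp only [c]; exact_mod_cast (by omega)
  have hf : f * ((#S - d : ℕ) : K) = c := by
    rcases eq_or_ne ((#S - d : ℕ) : K) 0 with h0 | h0
    · rw [h0, mul_zero]; exact (le_antisymm (h0 ▸ hcS) (Nat.cast_nonneg _)).symm
    · exact div_mul_cancel₀ _ h0
  have hf01 : f ∈ Set.Icc 0 1 := ⟨by positivity, div_le_one_of_le₀ hcS (Nat.cast_nonneg _)⟩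
  -- the extra coordinate `1` makes the vertex keep the total mass as well
  obtain ⟨μ', hμ', hsum', hfrac⟩ := exists_card_fractionalIndices_le_finrank S
    (fun x ↦ ((1 : K), v x)) (μ := fun x ↦ f * μ x)
    fun x hx ↦ ⟨mul_nonneg hf01.1 (hμ x hx).1, mul_le_one₀ hf01.2 (hμ x hx).1 (hμ x hx).2⟩
  rw [finrank_prod, finrank_self, add_comm] at hfrac
  have hmass : ∑ x ∈ S, μ' x = c := by
    simpa [Prod.fst_sum, ← mul_sum, hμsum, hf] using congrArg Prod.fst hsum'
  have hv' : ∑ x ∈ S, μ' x • v x = 0 := by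
    simpa [Prod.snd_sum, mul_smul, ← smul_sum, hμv] using congrArg Prod.snd hsum'
  obtain ⟨x, hx, hx0⟩ := exists_eq_zero_of_sum_le hS hμ' hfrac
    (hmass.le.trans_eq (by simp only [c]; congr 1; omega))
  refine ⟨x, hx, μ', fun y hy ↦ hμ' y (mem_of_mem_erase hy), ?_, ?_⟩
  · rw [sum_erase _ hx0, hmass, card_erase_of_mem hx]
  · rw [sum_erase _ (by rw [hx0, zero_smul]), hv']

lemma HasSteinitzWeights.exists_chain [DecidableEq ι] [FiniteDimensional K W] {v : ι → W}
    {S : Finset ι} (h : HasSteinitzWeights K v S) :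
    ∃ C : ℕ → Finset ι, Monotone C ∧ C #S = S ∧
      ∀ j ≤ #S, #(C j) = j ∧ HasSteinitzWeights K v (C j) := by
  induction hk : #S generalizing S with
  | zero => exact ⟨fun _ ↦ S, monotone_const, rfl, fun j hj ↦ ⟨by simp only; omega, h⟩⟩
  | succ k ih =>
    obtain ⟨x, hx, hx'⟩ := h.exists_erase (card_pos.1 (by omega))
    have hcard : #(S.erase x) = k := by rw [card_erase_of_mem hx]; omega
    obtain ⟨C, hC, hCk, hCj⟩ := ih hx' hcard
    refine ⟨fun j ↦ if j ≤ k then C j else S, monotone_nat_of_le_succ fun j ↦ ?_, by simp,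
      fun j hj ↦ ?_⟩
    · by_cases hjk : j + 1 ≤ k
      · simpa [hjk, show j ≤ k by omega] using hC j.le_succ
      · by_cases hj : j ≤ k
        · simpa [hj, hjk, show j = k by omega, hCk] using erase_subset x S
        · simp [hj, hjk]
    · by_cases hjk : j ≤ k
      · simpa [hjk] using hCj j hjk
      · simpa [hjk, show j = k + 1 by omega] using ⟨hk, h⟩

theorem exists_monotone_chain_abs_sum_le [Fintype ι] [DecidableEq ι] {m : ℕ}
    (v : ι → Fin m → K) (hv : ∑ x, v x = 0) {a : K} (ha : 0 ≤ a) (hva : ∀ x i, |v x i| ≤ a) :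
    ∃ C : ℕ → Finset ι, Monotone C ∧
      ∀ j ≤ Fintype.card ι, #(C j) = j ∧ ∀ i, |∑ x ∈ C j, v x i| ≤ m * a := by
  obtain ⟨C, hC, -, hCj⟩ := (hasSteinitzWeights_of_sum_eq_zero (K := K) hv).exists_chain
  refine ⟨C, hC, fun j hj ↦ ⟨(hCj j hj).1, fun i ↦ ?_⟩⟩
  simpa [finrank_fin_fun, Finset.sum_apply] using
    (hCj j hj).2.abs_map_sum_le (LinearMap.proj i) ha fun x _ ↦ hva x i

end Steinitz

lemma card_le_of_injOn_of_abs_le {α κ : Type*} [Fintype κ] [DecidableEq κ] {s : Finset α}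
    {f : α → κ → ℤ} (hf : Set.InjOn f s) {b : ℕ} (hb : ∀ x ∈ s, ∀ i, |f x i| ≤ b) :
    (#s : ℤ) ≤ (2 * b + 1) ^ Fintype.card κ := by
  let box : Finset (κ → ℤ) := Fintype.piFinset fun _ ↦ Icc (-(b : ℤ)) b
  have hmaps : Set.MapsTo f s box := fun x hx ↦
    mem_coe.2 (Fintype.mem_piFinset.2 fun i ↦ mem_Icc.2 (abs_le.1 (hb x (mem_coe.1 hx) i)))
  have hbox : (#box : ℤ) = (2 * b + 1) ^ Fintype.card κ := by
    rw [Fintype.card_piFinset, prod_const, Int.card_Icc, card_univ]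
    rw [Nat.cast_pow, Int.toNat_of_nonneg (by omega)]
    ring
  exact hbox ▸ (Nat.cast_le.2 (card_le_card_of_injOn f hmaps hf))

section Graver

open Matrix

lemma abs_sign_smul_transpose_le {m n : Type*} (A : Matrix m n ℤ) (z : ℤ) (i : n) (r : m) :
    |(z.sign • Aᵀ i) r| ≤ |A r i| := by
  rcases eq_or_ne z 0 with rfl | hz
  · simp
  · simp [abs_mul, Int.abs_sign_of_ne_zero hz]

variable {n : Type*} [Fintype n]

/-- `g` seen as `∑ i, |g i|` signed unit vectors: the index `⟨i, j⟩` stands for the `j`-th copy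
of `sign (g i) • e i`. -/
abbrev UnitSteps (g : n → ℤ) : Type _ := Σ i, Fin (g i).natAbs

lemma card_unitSteps (g : n → ℤ) : (Fintype.card (UnitSteps g) : ℤ) = ∑ i, |g i| := by
  simp [Fintype.card_sigma]

variable [DecidableEq n]

/-- The sum of the unit steps of `g` indexed by `D`. -/
def stepSum (g : n → ℤ) (D : Finset (UnitSteps g)) : n → ℤ :=
  fun i ↦ (g i).sign * #{x ∈ D | x.1 = i}

lemma card_filter_fst_univ (g : n → ℤ) (i : n) :
    #{x : UnitSteps g | x.1 = i} = (g i).natAbs := by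
  rw [card_filter, Fintype.sum_sigma]
  simp [apply_ite]

lemma card_filter_fst_le (g : n → ℤ) (D : Finset (UnitSteps g)) (i : n) :
    #{x ∈ D | x.1 = i} ≤ (g i).natAbs :=
  card_filter_fst_univ g i ▸ card_le_card (filter_subset_filter _ (subset_univ D))

lemma stepSum_univ (g : n → ℤ) : stepSum g univ = g := by
  ext i
  simp [stepSum, card_filter_fst_univ, Int.sign_mul_abs]

lemma abs_stepSum (g : n → ℤ) (D : Finset (UnitSteps g)) (i : n) :
    |stepSum g D i| = #{x ∈ D | x.1 = i} := by
  rcases eq_or_ne (g i) 0 with h | h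
  · have hle := card_filter_fst_le g D i
    simp only [h, Int.natAbs_zero, nonpos_iff_eq_zero] at hle
    simp [stepSum, h, hle]
  · rw [stepSum, abs_mul, Int.abs_sign_of_ne_zero h, one_mul, Nat.abs_cast]

lemma mulVec_stepSum {m : Type*} (A : Matrix m n ℤ) (g : n → ℤ) (D : Finset (UnitSteps g)) :
    A *ᵥ stepSum g D = ∑ x ∈ D, (g x.1).sign • Aᵀ x.1 := by
  ext r
  rw [← sum_fiberwise D Sigma.fst]
  simp only [mulVec, dotProduct, stepSum, Finset.sum_apply, Pi.smul_apply, transpose_apply,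
    smul_eq_mul]
  refine sum_congr rfl fun i _ ↦ ?_
  rw [sum_congr rfl fun x hx ↦ by rw [(mem_filter.1 hx).2], sum_const, nsmul_eq_mul]
  ring

lemma conformalTo_stepSum (g : n → ℤ) (D : Finset (UnitSteps g)) :
    ConformalTo (stepSum g D) g := fun i ↦ by
  refine ⟨?_, ?_⟩
  · rw [stepSum, mul_right_comm, Int.sign_mul_self_eq_abs]
    positivity
  · rw [abs_stepSum, ← Int.natCast_natAbs, Nat.cast_le]
    exact card_filter_fst_le g D i

lemma sum_abs_stepSum (g : n → ℤ) (D : Finset (UnitSteps g)) :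
    ∑ i, |stepSum g D i| = #D := by
  simp only [abs_stepSum]
  exact_mod_cast (card_eq_sum_card_fiberwise (f := Sigma.fst) fun x _ ↦ mem_univ x.1).symm

variable {m : Type*} [Fintype m] {A : Matrix m n ℤ} {g : n → ℤ}

lemma InGraver.sum_unitSteps_eq_zero (hg : InGraver A g) :
    ∑ x : UnitSteps g, (g x.1).sign • Aᵀ x.1 = 0 := by
  rw [← mulVec_stepSum, stepSum_univ, hg.2.1]

lemma InGraver.sum_ne_sum_of_ssubset (hg : InGraver A g) {P Q : Finset (UnitSteps g)}
    (hPQ : P ⊂ Q) (hQ : (#Q : ℤ) < ∑ i, |g i|) :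
    ∑ x ∈ P, (g x.1).sign • Aᵀ x.1 ≠ ∑ x ∈ Q, (g x.1).sign • Aᵀ x.1 := by
  intro heq
  set D := Q \ P
  have hD : A *ᵥ stepSum g D = 0 := by
    rw [mulVec_stepSum, ← add_eq_right (b := ∑ x ∈ P, (g x.1).sign • Aᵀ x.1),
      sum_sdiff hPQ.subset, heq]
  have hDcard : 0 < #D := card_pos.2 (sdiff_nonempty.2 hPQ.not_subset)
  have hne : stepSum g D ≠ 0 := fun h ↦ by
    have := sum_abs_stepSum g D
    simp only [h, Pi.zero_apply, abs_zero, sum_const_zero] at this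
    omega
  have hgD := sum_abs_stepSum g D
  rw [hg.2.2 _ hne hD (conformalTo_stepSum g D)] at hgD
  have : #D ≤ #Q := card_le_card sdiff_subset
  omega

lemma InGraver.injOn_sum_unitSteps (hg : InGraver A g) {C : ℕ → Finset (UnitSteps g)}
    (hC : Monotone C) (hcard : ∀ j < Fintype.card (UnitSteps g), #(C j) = j) :
    Set.InjOn (fun j ↦ ∑ x ∈ C j, (g x.1).sign • Aᵀ x.1)
      (range (Fintype.card (UnitSteps g))) := by
  have key : ∀ p q, p < q → q < Fintype.card (UnitSteps g) →
      ∑ x ∈ C p, (g x.1).sign • Aᵀ x.1 ≠ ∑ x ∈ C q, (g x.1).sign • Aᵀ x.1 := fun p q hpq hq ↦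
    hg.sum_ne_sum_of_ssubset ((hC hpq.le).ssubset_of_ne fun h ↦ by
        have := congrArg card h; rw [hcard p (hpq.trans hq), hcard q hq] at this; omega)
      (by rw [← card_unitSteps, hcard q hq]; exact_mod_cast hq)
  intro p hp q hq h
  by_contra hne
  rcases lt_or_gt_of_ne hne with hlt | hlt
  · exact key p q hlt (mem_range.1 hq) h
  · exact key q p hlt (mem_range.1 hp) h.symm

end Graver

/-- Every Graver basis element of `A ∈ ℤ^{m×n}` has ℓ₁-norm at most
`(2‖A‖∞ m + 1)^m`. -/
theorem stmt9 (m n : ℕ) (A : Matrix (Fin m) (Fin n) ℤ)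
    (g : Fin n → ℤ) (hg : InGraver A g) :
    (∑ i, |g i|) ≤
      (2 * ((Finset.univ.sup fun p : Fin m × Fin n => (A p.1 p.2).natAbs : ℕ) : ℤ)
        * (m : ℤ) + 1) ^ m := by
  set a := univ.sup fun p : Fin m × Fin n ↦ (A p.1 p.2).natAbs
  set w : UnitSteps g → Fin m → ℤ := fun x ↦ (g x.1).sign • A.transpose x.1
  have hw : ∀ x r, |(w x r : ℚ)| ≤ a := fun x r ↦ by
    have hA : |A r x.1| ≤ a := Int.abs_eq_natAbs _ ▸ Nat.cast_le.2
      (le_sup (f := fun p : Fin m × Fin n ↦ (A p.1 p.2).natAbs) (mem_univ (r, x.1)))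
    exact_mod_cast (abs_sign_smul_transpose_le A (g x.1) x.1 r).trans hA
  have hsum : ∑ x, (fun r ↦ (w x r : ℚ)) = 0 := by
    ext r
    have := congrFun hg.sum_unitSteps_eq_zero r
    simp only [Finset.sum_apply, Pi.zero_apply] at this ⊢
    exact_mod_cast this
  obtain ⟨C, hC, hCj⟩ := exists_monotone_chain_abs_sum_le _ hsum (Nat.cast_nonneg a) hw
  have hbound := card_le_of_injOn_of_abs_le (b := m * a)
    (hg.injOn_sum_unitSteps hC fun j hj ↦ (hCj j hj.le).1) fun j hj i ↦ by
      have := (hCj j (mem_range.1 hj).le).2 i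
      simp only [Finset.sum_apply]
      exact_mod_cast this
  rw [card_range, card_unitSteps, Fintype.card_fin] at hbound
  exact hbound.trans_eq (by push_cast; ring)
end

section
/- Let w ∈ ℚ^d and M ∈ ℕ. Then there exists w̃ ∈ ℤ^d with ‖w̃‖_∞ ≤ 2^{O(d³)} · M^{O(d²)} such that for all x, y ∈ [−M, M]^d ∩ ℤ^d: w·x ≤ w·y if and only if w̃·x ≤ w̃·y. -/
/-!
Only the signs of `w · z` for `z` in the difference box `[-2M, 2M]^d` matter. The conditions
`w̃ · z = 0` where `w · z = 0`, and `w̃ · z ≥ 1` where `w · z > 0` (resp. `w̃ · (-z) ≥ 1` where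
`w · z < 0`), cut out a nonempty rational polyhedron, containing a multiple of `w`. Moving inside
it along directions that keep all tight constraints tight, one reaches a point on a minimal face,
where the tight constraints force the values of all the others. Solving a nonsingular square
subsystem of the tight constraints by Cramer's rule and clearing the denominator gives an integer
vector with entries at most `d! (2M+1)^d` that satisfies every tight equation up to the positive
factor `det`, hence every strict inequality as well.
-/

universe u

open Matrix

section MinimalFace

variable {𝕜 ι α β : Type*} [Field 𝕜] [LinearOrder 𝕜] [IsStrictOrderedRing 𝕜] [Fintype ι]
  {A : Matrix α ι 𝕜} {B : Matrix β ι 𝕜} {u v : ι → 𝕜}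

theorem exists_tight_set_ssubset [Finite β] (hAu : A *ᵥ u = 0) (hBu : 1 ≤ B *ᵥ u)
    (hAv : A *ᵥ v = 0) (hv : ∀ b, (B *ᵥ u) b = 1 → (B *ᵥ v) b = 0) {b₀ : β}
    (hb₀ : (B *ᵥ v) b₀ < 0) :
    ∃ u', A *ᵥ u' = 0 ∧ 1 ≤ B *ᵥ u' ∧ {b | (B *ᵥ u) b = 1} ⊂ {b | (B *ᵥ u') b = 1} := by
  -- ratio test: the longest step along `v` keeping `1 ≤ B *ᵥ u`
  set step : β → 𝕜 := fun b => ((B *ᵥ u) b - 1) / -(B *ᵥ v) b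
  obtain ⟨b₁, hb₁, hmin⟩ := Set.exists_min_image {b | (B *ᵥ v) b < 0} step (Set.toFinite _)
    ⟨b₀, hb₀⟩
  have hb₁ : (B *ᵥ v) b₁ < 0 := hb₁
  replace hBu : ∀ b, 1 ≤ (B *ᵥ u) b := hBu
  have hstep : 0 ≤ step b₁ := div_nonneg (sub_nonneg.mpr (hBu b₁)) (neg_nonneg.mpr hb₁.le)
  have hBu' : ∀ b, (B *ᵥ (u + step b₁ • v)) b = (B *ᵥ u) b + step b₁ * (B *ᵥ v) b := by
    intro b
    rw [mulVec_add, mulVec_smul, Pi.add_apply, Pi.smul_apply, smul_eq_mul]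
  refine ⟨u + step b₁ • v, by rw [mulVec_add, mulVec_smul, hAu, hAv, smul_zero, add_zero],
    fun b => ?_, ?_⟩
  · rw [Pi.one_apply, hBu']
    rcases lt_or_ge ((B *ᵥ v) b) 0 with hneg | hnonneg
    · have := (le_div_iff₀ (neg_pos.mpr hneg)).mp (hmin b hneg)
      linarith
    · nlinarith [hBu b]
  · refine Set.ssubset_iff_of_subset (fun b hb => ?_) |>.mpr ⟨b₁, ?_, fun h => hb₁.ne (hv b₁ h)⟩
    · rw [Set.mem_ofPred_eq, hBu', hb, hv b hb, mul_zero, add_zero]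
    · rw [Set.mem_ofPred_eq, hBu']
      simp only [step]
      field_simp [hb₁.ne]
      ring

theorem exists_point_on_minimal_face [Finite β] {u₀ : ι → 𝕜} (hA : A *ᵥ u₀ = 0)
    (hB : 1 ≤ B *ᵥ u₀) :
    ∃ u, A *ᵥ u = 0 ∧ 1 ≤ B *ᵥ u ∧
      ∀ v, A *ᵥ v = 0 → (∀ b, (B *ᵥ u) b = 1 → (B *ᵥ v) b = 0) → B *ᵥ v = 0 := by
  obtain ⟨u, ⟨hAu, hBu⟩, hmax⟩ := exists_maximalFor_of_wellFoundedGT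
    (fun u => A *ᵥ u = 0 ∧ 1 ≤ B *ᵥ u) (fun u => {b | (B *ᵥ u) b = 1}) ⟨u₀, hA, hB⟩
  have hnonneg : ∀ v, A *ᵥ v = 0 → (∀ b, (B *ᵥ u) b = 1 → (B *ᵥ v) b = 0) →
      ∀ b, 0 ≤ (B *ᵥ v) b := by
    intro v hAv hv b
    by_contra! hb
    obtain ⟨u', hAu', hBu', hlt⟩ := exists_tight_set_ssubset hAu hBu hAv hv hb
    exact hlt.not_subset (hmax ⟨hAu', hBu'⟩ hlt.subset)
  refine ⟨u, hAu, hBu, fun v hAv hv => funext fun b => le_antisymm ?_ (hnonneg v hAv hv b)⟩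
  have := hnonneg (-v) (by rw [mulVec_neg, hAv, neg_zero])
    (fun b hb => by rw [mulVec_neg, Pi.neg_apply, hv b hb, neg_zero]) b
  rwa [mulVec_neg, Pi.neg_apply, neg_nonneg] at this

end MinimalFace

theorem Matrix.exists_det_submatrix_ne_zero_of_linearIndependent_row {K m n : Type*} [Field K]
    [Fintype m] [DecidableEq m] [Fintype n] {A : Matrix m n K}
    (hA : LinearIndependent K A.row) :
    ∃ κ : m → n, Function.Injective κ ∧ (A.submatrix id κ).det ≠ 0 := by
  have hspan : Submodule.span K (Set.range A.col) = ⊤ := by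
    apply Submodule.eq_top_of_finrank_eq
    rw [← rank_eq_finrank_span_cols, hA.rank_matrix, Module.finrank_fintype_fun_eq_card]
  obtain ⟨τ, c, hc, hcspan, hcli⟩ := exists_linearIndependent' K A.col
  let b : Module.Basis τ K (m → K) := .mk hcli (by rw [hcspan, hspan])
  let e : m ≃ τ := (b.indexEquiv (Pi.basisFun K m)).symm
  refine ⟨c ∘ e, hc.comp e.injective, ?_⟩
  have hcols : LinearIndependent K (A.submatrix id (c ∘ e)).col := hcli.comp e e.injective
  exact ((isUnit_iff_isUnit_det _).mp (linearIndependent_cols_iff_isUnit.mp hcols)).ne_zero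

theorem Matrix.dotProduct_eq_zero_of_mem_span {K n : Type*} [CommSemiring K] [Fintype n]
    {S : Set (n → K)} {z : n → K} (hz : ∀ r ∈ S, r ⬝ᵥ z = 0) {r : n → K}
    (hr : r ∈ Submodule.span K S) : r ⬝ᵥ z = 0 := by
  induction hr using Submodule.span_induction with
  | mem r hr => exact hz r hr
  | zero => exact zero_dotProduct z
  | add a b _ _ ha hb => rw [add_dotProduct, ha, hb, add_zero]
  | smul c a _ ha => rw [smul_dotProduct, ha, smul_zero]

theorem Matrix.dotProduct_extend_zero {R m n : Type*} [NonUnitalNonAssocSemiring R] [Fintype m]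
    [Fintype n] {κ : m → n} (hκ : Function.Injective κ) (r : n → R) (c : m → R) :
    r ⬝ᵥ Function.extend κ c 0 = (r ∘ κ) ⬝ᵥ c :=
  (Fintype.sum_of_injective κ hκ _ _
    (fun j hj => by rw [Function.extend_apply' _ _ _ hj, Pi.zero_apply, mul_zero])
    (fun k => by rw [Function.comp_apply, hκ.extend_apply])).symm

theorem Matrix.abs_cramer_le {R n : Type*} [CommRing R] [LinearOrder R] [IsStrictOrderedRing R]
    [Fintype n] [DecidableEq n] {Q : Matrix n n R} {b : n → R} {C : R}
    (hQ : ∀ i j, |Q i j| ≤ C) (hb : ∀ i, |b i| ≤ C) (i : n) :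
    |cramer Q b i| ≤ (Fintype.card n).factorial * C ^ Fintype.card n := by
  rw [cramer_apply, ← nsmul_eq_mul]
  refine det_le (abv := AbsoluteValue.abs) fun k j => ?_
  rcases eq_or_ne j i with rfl | hj
  · simpa using hb k
  · simpa [updateCol_ne hj] using hQ k j

theorem exists_bounded_int_mulVec_eq_smul {ρ ι : Type*} [Fintype ι] (R : Matrix ρ ι ℤ) (e : ρ → ℤ)
    {C : ℤ} (hC : 1 ≤ C) (hR : ∀ i j, |R i j| ≤ C) (he : ∀ i, |e i| ≤ C) {u : ι → ℚ}
    (hu : R.map (Int.cast : ℤ → ℚ) *ᵥ u = Int.cast ∘ e) :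
    ∃ (x : ι → ℤ) (D : ℤ), 0 < D ∧
      (∀ j, |x j| ≤ (Fintype.card ι).factorial * C ^ Fintype.card ι) ∧ R *ᵥ x = D • e := by
  -- Cramer's rule on a nonsingular square subsystem of a row basis; every other row is a
  -- rational combination of the basis rows, so the solution satisfies it as well.
  classical
  set Rq := R.map (Int.cast : ℤ → ℚ)
  obtain ⟨τ, s, -, hspan, hli⟩ := exists_linearIndependent' ℚ Rq.row
  have := hli.finite
  have := Fintype.ofFinite τ
  obtain ⟨κ, hκ, hdet⟩ :=
    exists_det_submatrix_ne_zero_of_linearIndependent_row (A := Rq.submatrix s id) hli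
  set Q := R.submatrix s κ
  have hQ : Q.det ≠ 0 := by
    have : (Rq.submatrix s id).submatrix id κ = (Int.castRingHom ℚ).mapMatrix Q := rfl
    rw [this, ← RingHom.map_det] at hdet
    exact fun h => hdet (by rw [h, map_zero])
  set c := cramer Q (e ∘ s)
  set x := Function.extend κ c 0
  have hRx_rows : ∀ t, (R *ᵥ x) (s t) = Q.det * e (s t) := by
    intro t
    have := congrFun (mulVec_cramer Q (e ∘ s)) t
    rw [mulVec, dotProduct_extend_zero hκ]
    exact this
  have hrow : ∀ i, Rq.row i ⬝ᵥ (Int.cast ∘ x - (Q.det : ℚ) • u) = (R *ᵥ x) i - Q.det * e i := by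
    intro i
    rw [dotProduct_sub, dotProduct_smul, smul_eq_mul]
    congr 1
    · exact ((Int.castRingHom ℚ).map_dotProduct (R i) x).symm
    · exact congrArg _ (congrFun hu i)
  have hRx : R *ᵥ x = Q.det • e := by
    have hz : ∀ r ∈ Set.range (Rq.row ∘ s), r ⬝ᵥ (Int.cast ∘ x - (Q.det : ℚ) • u) = 0 := by
      rintro _ ⟨t, rfl⟩
      rw [Function.comp_apply, hrow, hRx_rows, Int.cast_mul, sub_self]
    funext i
    have hi : Rq.row i ∈ Submodule.span ℚ (Set.range (Rq.row ∘ s)) :=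
      hspan ▸ Submodule.subset_span ⟨i, rfl⟩
    have := dotProduct_eq_zero_of_mem_span hz hi
    rw [hrow, sub_eq_zero] at this
    exact_mod_cast this
  have hbound : ∀ j, |x j| ≤ (Fintype.card ι).factorial * C ^ Fintype.card ι := by
    intro j
    by_cases hj : ∃ k, κ k = j
    · obtain ⟨k, rfl⟩ := hj
      have hcard : Fintype.card τ ≤ Fintype.card ι := Fintype.card_le_of_injective κ hκ
      calc |x (κ k)| = |c k| := congrArg abs (hκ.extend_apply c 0 k)
        _ ≤ (Fintype.card τ).factorial * C ^ Fintype.card τ :=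
          abs_cramer_le (fun _ _ => hR _ _) (fun _ => he _) k
        _ ≤ (Fintype.card ι).factorial * C ^ Fintype.card ι := by
          gcongr
    · rw [show x j = 0 from Function.extend_apply' c (0 : ι → ℤ) j hj, abs_zero]
      exact mul_nonneg (Nat.cast_nonneg _) (pow_nonneg (zero_le_one.trans hC) _)
  rcases hQ.lt_or_gt with hneg | hpos
  · exact ⟨-x, -Q.det, neg_pos.mpr hneg, by simpa using hbound, by rw [mulVec_neg, hRx, neg_smul]⟩
  · exact ⟨x, Q.det, hpos, hbound, hRx⟩

theorem Finite.exists_one_le_smul {β 𝕜 : Type*} [Finite β] [Field 𝕜] [LinearOrder 𝕜]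
    [IsStrictOrderedRing 𝕜] {f : β → 𝕜} (hf : ∀ b, 0 < f b) : ∃ t : 𝕜, 1 ≤ t • f := by
  cases isEmpty_or_nonempty β
  · exact ⟨1, fun b => isEmptyElim b⟩
  · obtain ⟨b₀, hb₀⟩ := Finite.exists_min f
    refine ⟨(f b₀)⁻¹, fun b => ?_⟩
    rw [Pi.one_apply, Pi.smul_apply, smul_eq_mul, ← div_eq_inv_mul, one_le_div (hf b₀)]
    exact hb₀ b

theorem Matrix.map_mulVec_comp {R S m n : Type*} [NonAssocSemiring R] [NonAssocSemiring S]
    [Fintype n] (f : R →+* S) (M : Matrix m n R) (v : n → R) :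
    M.map f *ᵥ (f ∘ v) = f ∘ (M *ᵥ v) :=
  funext fun i => (f.map_mulVec M v i).symm

theorem exists_small_int_solution {α β ι : Type*} [Fintype ι] [Finite β]
    (A : Matrix α ι ℤ) (B : Matrix β ι ℤ) {C : ℤ} (hC : 1 ≤ C) (hA : ∀ i j, |A i j| ≤ C)
    (hB : ∀ i j, |B i j| ≤ C) {w : ι → ℚ} (hAw : A.map (Int.cast : ℤ → ℚ) *ᵥ w = 0)
    (hBw : ∀ b, 0 < (B.map (Int.cast : ℤ → ℚ) *ᵥ w) b) :
    ∃ x : ι → ℤ, (∀ j, |x j| ≤ (Fintype.card ι).factorial * C ^ Fintype.card ι) ∧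
      A *ᵥ x = 0 ∧ ∀ b, 0 < (B *ᵥ x) b := by
  set A' := A.map (Int.castRingHom ℚ)
  set B' := B.map (Int.castRingHom ℚ)
  obtain ⟨t, ht⟩ := Finite.exists_one_le_smul hBw
  obtain ⟨u, hAu, hBu, hface⟩ := exists_point_on_minimal_face (A := A') (B := B') (u₀ := t • w)
    (by rw [mulVec_smul]; exact (congrArg _ hAw).trans (smul_zero t))
    (by rw [mulVec_smul]; exact ht)
  let S := {b // (B' *ᵥ u) b = 1}
  let R : Matrix (α ⊕ S) ι ℤ := fromRows A (B.submatrix Subtype.val id)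
  let e : α ⊕ S → ℤ := Sum.elim 0 1
  have hRu : R.map (Int.cast : ℤ → ℚ) *ᵥ u = Int.cast ∘ e := by
    funext i
    rcases i with a | ⟨b, hb⟩
    · change (A' *ᵥ u) a = ((0 : ℤ) : ℚ)
      rw [Int.cast_zero, hAu, Pi.zero_apply]
    · change (B' *ᵥ u) b = ((1 : ℤ) : ℚ)
      rw [Int.cast_one, hb]
  obtain ⟨x, D, hD, hx, hRx⟩ := exists_bounded_int_mulVec_eq_smul R e hC
    (by rintro (a | b) j <;> simp [R, hA, hB]) (by rintro (a | b) <;> simp [e] <;> linarith) hRu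
  have hAx : A *ᵥ x = 0 := funext fun a => by simpa [R, e] using congrFun hRx (Sum.inl a)
  have hSx : ∀ s : S, (B *ᵥ x) s = D := fun s => by
    have := congrFun hRx (Sum.inr s)
    simp only [R, e, fromRows_mulVec, Sum.elim_inr, Pi.smul_apply, Pi.one_apply, smul_eq_mul,
      mul_one] at this
    exact this
  have hDq : (0 : ℚ) < D := Int.cast_pos.mpr hD
  set v : ι → ℚ := (D : ℚ)⁻¹ • (Int.castRingHom ℚ ∘ x) - u
  have hBv : ∀ b, (B' *ᵥ v) b = (D : ℚ)⁻¹ * (B *ᵥ x) b - (B' *ᵥ u) b := fun b => by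
    rw [mulVec_sub, mulVec_smul, map_mulVec_comp]
    rfl
  -- `v` vanishes on the rows of `A` and on the tight rows of `B`, hence on all rows of `B`.
  have hv : B' *ᵥ v = 0 := hface v
    (by rw [mulVec_sub, mulVec_smul, map_mulVec_comp, hAx, hAu]; simp)
    (fun b hb => by rw [hBv, hSx ⟨b, hb⟩, hb, inv_mul_cancel₀ hDq.ne', sub_self])
  refine ⟨x, hx, hAx, fun b => ?_⟩
  have h1 : (1 : ℚ) ≤ (D : ℚ)⁻¹ * (B *ᵥ x) b := by
    rw [sub_eq_zero.mp ((hBv b).symm.trans (congrFun hv b))]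
    exact hBu b
  have h2 : (0 : ℚ) < (B *ᵥ x) b := by
    have := (le_inv_mul_iff₀ hDq).mp h1
    linarith
  exact_mod_cast h2

theorem exists_small_int_vector_sign_eq {ι : Type u} [Fintype ι] (Z : Finset (ι → ℤ)) {C : ℤ}
    (hC : 1 ≤ C) (hZ : ∀ z ∈ Z, ∀ j, |z j| ≤ C) (w : ι → ℚ) :
    ∃ x : ι → ℤ, (∀ j, |x j| ≤ (Fintype.card ι).factorial * C ^ Fintype.card ι) ∧
      ∀ z ∈ Z, SignType.sign (w ⬝ᵥ (Int.cast ∘ z)) = SignType.sign (x ⬝ᵥ z) := by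
  classical
  set Zzero := Z.filter fun z => w ⬝ᵥ (Int.cast ∘ z) = 0
  set Zpos := Z.filter fun z => 0 < w ⬝ᵥ (Int.cast ∘ z)
  set Zneg := Z.filter fun z => w ⬝ᵥ (Int.cast ∘ z) < 0
  have hmem {p : (ι → ℤ) → Prop} [DecidablePred p] (z : Z.filter p) : z.1 ∈ Z ∧ p z.1 :=
    Finset.mem_filter.mp z.2
  have hrow {κ : Type u} (M : Matrix κ ι ℤ) (k : κ) :
      (M.map (Int.cast : ℤ → ℚ) *ᵥ w) k = w ⬝ᵥ (Int.cast ∘ M k) :=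
    dotProduct_comm _ _
  let A : Matrix Zzero ι ℤ := fun z => z.1
  let B : Matrix (Zpos ⊕ Zneg) ι ℤ := fromRows (fun z => z.1) (fun z => -z.1)
  obtain ⟨x, hx, hAx, hBx⟩ := exists_small_int_solution A B hC (w := w)
    (fun z => hZ _ (hmem z).1)
    (by
      rintro (z | z) j
      · exact hZ _ (hmem z).1 j
      · exact (abs_neg _).trans_le (hZ _ (hmem z).1 j))
    (funext fun z => (hrow A z).trans (hmem z).2)
    (by
      rintro (z | z) <;> rw [hrow]
      · exact (hmem z).2
      · change 0 < w ⬝ᵥ (Int.cast ∘ (-z.1))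
        rw [show (Int.cast ∘ (-z.1) : ι → ℚ) = -(Int.cast ∘ z.1) by ext; simp, dotProduct_neg,
          neg_pos]
        exact (hmem z).2)
  refine ⟨x, hx, fun z hz => ?_⟩
  rcases lt_trichotomy (w ⬝ᵥ (Int.cast ∘ z)) 0 with hneg | hzero | hpos
  · have h := hBx (Sum.inr ⟨z, Finset.mem_filter.mpr ⟨hz, hneg⟩⟩)
    change 0 < (-z) ⬝ᵥ x at h
    rw [neg_dotProduct, neg_pos, dotProduct_comm] at h
    rw [sign_neg hneg, sign_neg h]
  · have h := congrFun hAx ⟨z, Finset.mem_filter.mpr ⟨hz, hzero⟩⟩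
    change z ⬝ᵥ x = 0 at h
    rw [hzero, dotProduct_comm, h, sign_zero, sign_zero]
  · have h := hBx (Sum.inl ⟨z, Finset.mem_filter.mpr ⟨hz, hpos⟩⟩)
    change 0 < z ⬝ᵥ x at h
    rw [dotProduct_comm] at h
    rw [sign_pos hpos, sign_pos h]

theorem factorial_mul_two_mul_add_one_pow_le (d M : ℕ) :
    d.factorial * (2 * M + 1) ^ d ≤ 2 ^ (2 * d ^ 3) * (M + 1) ^ (2 * d ^ 2) := by
  have hexp₁ : d * d + d ≤ 2 * d ^ 3 := by
    rcases Nat.eq_zero_or_pos d with rfl | hd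
    · simp
    · nlinarith
  have hexp₂ : d ≤ 2 * d ^ 2 := by nlinarith
  calc d.factorial * (2 * M + 1) ^ d ≤ (2 ^ d) ^ d * (2 * (M + 1)) ^ d := by
        gcongr
        · exact d.factorial_le_pow.trans (Nat.pow_le_pow_left Nat.lt_two_pow_self.le d)
        · omega
    _ = 2 ^ (d * d + d) * (M + 1) ^ d := by rw [mul_pow, ← pow_mul, pow_add]; ring
    _ ≤ 2 ^ (2 * d ^ 3) * (M + 1) ^ (2 * d ^ 2) := by
        gcongr <;> omega

/-- Frank–Tardos: there is an absolute constant `c` such that every `w ∈ ℚ^d` admits an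
integer vector `w̃` with `‖w̃‖∞ ≤ 2^{c d³} (M+1)^{c d²}` inducing the same comparisons
as `w` on all integer points of `[-M, M]^d`. -/
theorem stmt15 : ∃ c : ℕ, ∀ (d : ℕ) (w : Fin d → ℚ) (M : ℕ),
    ∃ wt : Fin d → ℤ,
      (∀ i, |wt i| ≤ 2 ^ (c * d ^ 3) * ((M : ℤ) + 1) ^ (c * d ^ 2)) ∧
      ∀ x y : Fin d → ℤ, (∀ i, |x i| ≤ (M : ℤ)) → (∀ i, |y i| ≤ (M : ℤ)) →
        ((∑ i, w i * (x i : ℚ)) ≤ (∑ i, w i * (y i : ℚ)) ↔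
         (∑ i, wt i * x i) ≤ (∑ i, wt i * y i)) := by
  refine ⟨2, fun d w M => ?_⟩
  let box := Fintype.piFinset fun _ : Fin d => Finset.Icc (-(2 * M : ℤ)) (2 * M)
  have hbox : ∀ z ∈ box, ∀ j, |z j| ≤ 2 * (M : ℤ) + 1 := fun z hz j => by
    have := Finset.mem_Icc.mp (Fintype.mem_piFinset.mp hz j)
    rw [abs_le]; constructor <;> linarith [this.1, this.2]
  obtain ⟨wt, hwt, hsign⟩ := exists_small_int_vector_sign_eq box (by omega) hbox w
  refine ⟨wt, fun i => (hwt i).trans ?_, fun x y hx hy => ?_⟩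
  · rw [Fintype.card_fin]
    exact_mod_cast factorial_mul_two_mul_add_one_pow_le d M
  · have hyx : y - x ∈ box := Fintype.mem_piFinset.mpr fun j => Finset.mem_Icc.mpr <| by
      have := abs_le.mp (hx j); have := abs_le.mp (hy j)
      simp only [Pi.sub_apply]; constructor <;> linarith
    have hw : w ⬝ᵥ (Int.cast ∘ (y - x)) = ∑ i, w i * (y i : ℚ) - ∑ i, w i * (x i : ℚ) := by
      simp [dotProduct, mul_sub, Finset.sum_sub_distrib]
    have hwt : wt ⬝ᵥ (y - x) = ∑ i, wt i * y i - ∑ i, wt i * x i := dotProduct_sub wt y x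
    rw [← sub_nonneg, ← hw, ← sign_nonneg_iff, hsign _ hyx, sign_nonneg_iff, hwt, sub_nonneg]
end
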